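/- arXiv:1711.08603 — 6 statements merged into one kernel-verified Lean document; each statement's English description precedes it below -/
import Mathlib

section
/- Let q be a C^1 function on [0,∞) and define γ(y) = 2∫_0^y q(ξ) dξ and the scale function Λ(z) = ∫_0^z e^{γ(y)} dy. If the integral ∫_0^∞ e^{γ(y)} ∫_y^∞ e^{-γ(z)} dz dy is finite, then Λ(z) → ∞ as z → ∞. -/
/-!
Since `cosh ≥ 1`, `e^γ + e^{-γ} ≥ 1` pointwise, so on a half-line at least one of `∫ e^γ` and
`∫ e^{-γ}` diverges. Finiteness of the double integral forces `∫_y^∞ e^{-γ} < ∞` for some `y > 0`,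
hence `∫_y^∞ e^γ = ∞`, and `Λ → ∞` by monotone convergence.
-/

open MeasureTheory Real Filter

open Set

theorem continuousOn_primitive_Ici {q : ℝ → ℝ} {a : ℝ} (hq : ContinuousOn q (Ici a)) :
    ContinuousOn (fun y => ∫ t in a..y, q t) (Ici a) := by
  intro x (hx : a ≤ x)
  have hint : IntervalIntegrable q volume (min a a) (max a (x + 1)) := by
    rw [min_self, max_eq_right (by linarith)]
    exact (hq.mono Icc_subset_Ici_self).intervalIntegrable_of_Icc (by linarith)
  refine (intervalIntegral.continuousWithinAt_primitive Real.volume_singleton hint)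
    |>.mono_of_mem_nhdsWithin ?_
  rw [← Ici_inter_Iic]
  exact inter_mem_nhdsWithin _ (Iic_mem_nhds (lt_add_one x))

theorem measure_univ_le_lintegral_exp_add_lintegral_exp_neg {α : Type*} [MeasurableSpace α]
    {μ : Measure α} {γ : α → ℝ} (hγ : AEMeasurable γ μ) :
    μ univ ≤ (∫⁻ x, ENNReal.ofReal (exp (γ x)) ∂μ) + ∫⁻ x, ENNReal.ofReal (exp (-γ x)) ∂μ := by
  have h_one : ∀ t : ℝ, 1 ≤ ENNReal.ofReal (exp t) + ENNReal.ofReal (exp (-t)) := fun t => by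
    rw [← ENNReal.ofReal_add (exp_pos t).le (exp_pos _).le, ← ENNReal.ofReal_one]
    exact ENNReal.ofReal_le_ofReal (by linarith [one_le_cosh t, cosh_eq t])
  calc μ univ = ∫⁻ _, 1 ∂μ := by rw [lintegral_one]
    _ ≤ ∫⁻ x, ENNReal.ofReal (exp (γ x)) + ENNReal.ofReal (exp (-γ x)) ∂μ :=
        lintegral_mono fun x => h_one (γ x)
    _ = _ := lintegral_add_left' (by fun_prop) _

theorem exists_gt_setLIntegral_Ioi_ne_top {f g : ℝ → ENNReal} {a : ℝ}
    (hf : ∀ y ∈ Ioi a, f y ≠ 0) (h : ∫⁻ y in Ioi a, f y * ∫⁻ z in Ioi y, g z ≠ ⊤) :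
    ∃ y > a, ∫⁻ z in Ioi y, g z ≠ ⊤ := by
  by_contra! htop
  refine h ?_
  calc ∫⁻ y in Ioi a, f y * ∫⁻ z in Ioi y, g z = ∫⁻ _ in Ioi a, ⊤ :=
        setLIntegral_congr_fun measurableSet_Ioi fun y hy => by
          rw [htop y hy, ENNReal.mul_top (hf y hy)]
    _ = ⊤ := by simp

theorem tendsto_intervalIntegral_atTop_of_setLIntegral_Ioi_eq_top {f : ℝ → ℝ} {a : ℝ}
    (hf : ∀ b, IntegrableOn f (Ioc a b)) (hnn : ∀ x ∈ Ioi a, 0 ≤ f x)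
    (htop : ∫⁻ x in Ioi a, ENNReal.ofReal (f x) = ⊤) :
    Tendsto (fun b => ∫ x in a..b, f x) atTop atTop := by
  have hcover : AECover (volume.restrict (Ioi a)) atTop Iic := aecover_Iic tendsto_id
  have hrestrict : ∀ b,
      (volume.restrict (Ioi a)).restrict (Iic b) = volume.restrict (Ioc a b) := fun b => by
    rw [Measure.restrict_restrict measurableSet_Iic, Iic_inter_Ioi]
  have hfm : AEMeasurable f (volume.restrict (Ioi a)) :=
    hcover.aemeasurable fun b => by rw [hrestrict]; exact (hf b).aemeasurable
  rw [← ENNReal.tendsto_ofReal_nhds_top, ← htop]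
  refine (hcover.lintegral_tendsto_of_countably_generated hfm.ennreal_ofReal).congr' ?_
  filter_upwards [eventually_ge_atTop a] with b hb
  rw [hrestrict, intervalIntegral.integral_of_le hb, ofReal_integral_eq_lintegral_ofReal (hf b)]
  exact (ae_restrict_mem measurableSet_Ioc).mono fun x hx => hnn x hx.1

/-- If q is C¹ on [0,∞), γ(y) = 2∫₀^y q, Λ(z) = ∫₀^z e^{γ(y)} dy, and
H1: ∫₀^∞ e^{γ(y)} ∫_y^∞ e^{-γ(z)} dz dy < ∞, then Λ(z) → ∞ as z → ∞. -/
theorem scale_function_tendsto_atTop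
    (q γ : ℝ → ℝ)
    (hq : ContDiffOn ℝ 1 q (Set.Ici 0))
    (hγ : ∀ y, γ y = 2 * ∫ t in (0:ℝ)..y, q t)
    (H1 : ∫⁻ y in Set.Ioi (0:ℝ),
        ENNReal.ofReal (Real.exp (γ y)) *
          ∫⁻ z in Set.Ioi y, ENNReal.ofReal (Real.exp (-(γ z))) < ⊤) :
    Tendsto (fun z => ∫ y in (0:ℝ)..z, Real.exp (γ y)) atTop atTop := by
  have hγc : ContinuousOn γ (Ici 0) := by
    rw [funext hγ]
    exact continuousOn_const.mul (continuousOn_primitive_Ici hq.continuousOn)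
  obtain ⟨y, hy, htail⟩ :=
    exists_gt_setLIntegral_Ioi_ne_top (fun y _ => ENNReal.ofReal_pos.2 (exp_pos (γ y)) |>.ne') H1.ne
  have hγm : AEMeasurable γ (volume.restrict (Ioi y)) :=
    (hγc.mono fun x hx => (hy.trans hx).le).aemeasurable measurableSet_Ioi
  have htop : ∫⁻ x in Ioi y, ENNReal.ofReal (exp (γ x)) = ⊤ := by
    have h := measure_univ_le_lintegral_exp_add_lintegral_exp_neg hγm
    rw [Measure.restrict_apply_univ, volume_Ioi, top_le_iff, ENNReal.add_eq_top] at h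
    exact h.resolve_right htail
  refine tendsto_intervalIntegral_atTop_of_setLIntegral_Ioi_eq_top (fun b => ?_)
    (fun x _ => (exp_pos _).le) (top_le_iff.mp ?_)
  · exact ((continuous_exp.comp_continuousOn hγc).mono Icc_subset_Ici_self).integrableOn_Icc
      |>.mono_set Ioc_subset_Icc_self
  · exact htop ▸ lintegral_mono_set (Ioi_subset_Ioi hy.le)
end

section
/- Under hypothesis H1, the speed measure μ with density 2e^{-γ(y)} with respect to Lebesgue measure on (0,∞) is a finite measure; in particular ∫_0^∞ e^{-γ(y)} dy < ∞. -/
open MeasureTheory Real Filter ENNReal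

/-- Bound on the lintegral of `exp (-γ)` on a bounded interval `Ioc a b ⊆ [0,∞)`. -/
lemma speed_aux_Ioc_lt_top (q γ : ℝ → ℝ)
    (hq : ContDiffOn ℝ 1 q (Set.Ici 0))
    (hγ : ∀ y, γ y = 2 * ∫ t in (0:ℝ)..y, q t)
    {a b : ℝ} (ha : 0 ≤ a) :
    ∫⁻ z in Set.Ioc a b, ENNReal.ofReal (Real.exp (-(γ z))) < ⊤ := by
  rcases le_or_gt b a with hba | hab
  · rw [Set.Ioc_eq_empty (by exact fun h => absurd h (not_lt.2 hba)),
      Measure.restrict_empty, lintegral_zero_measure]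
    exact ENNReal.zero_lt_top
  · have hqint : ∀ c : ℝ, 0 ≤ c → IntervalIntegrable q volume 0 c := by
      intro c hc
      apply ContinuousOn.intervalIntegrable
      apply hq.continuousOn.mono
      rw [Set.uIcc_of_le hc]
      exact fun x hx => hx.1
    -- bound on γ on [0, b]
    set C : ℝ := 2 * ∫ t in (0:ℝ)..b, |q t| with hC
    have habs : IntervalIntegrable (fun t => |q t|) volume 0 b := by
      apply ContinuousOn.intervalIntegrable
      apply (hq.continuousOn.mono ?_).abs
      rw [Set.uIcc_of_le (ha.trans hab.le)]
      exact fun x hx => hx.1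
    have hbound : ∀ z ∈ Set.Ioc a b, Real.exp (-(γ z)) ≤ Real.exp C := by
      intro z hz
      have hz0 : 0 ≤ z := ha.trans hz.1.le
      apply Real.exp_le_exp.2
      have h1 : |γ z| ≤ C := by
        rw [hγ z, abs_mul, abs_two]
        have h2 : |∫ t in (0:ℝ)..z, q t| ≤ ∫ t in (0:ℝ)..z, |q t| :=
          intervalIntegral.abs_integral_le_integral_abs hz0
        have h3 : (∫ t in (0:ℝ)..z, |q t|) ≤ ∫ t in (0:ℝ)..b, |q t| := by
          apply intervalIntegral.integral_mono_interval le_rfl hz0 hz.2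
          · filter_upwards with x using abs_nonneg _
          · exact habs
        rw [hC]
        nlinarith [abs_nonneg (∫ t in (0:ℝ)..z, q t)]
      linarith [neg_abs_le (γ z), abs_nonneg (γ z)]
    calc ∫⁻ z in Set.Ioc a b, ENNReal.ofReal (Real.exp (-(γ z)))
        ≤ ∫⁻ _ in Set.Ioc a b, ENNReal.ofReal (Real.exp C) := by
          apply setLIntegral_mono' measurableSet_Ioc
          exact fun z hz => ENNReal.ofReal_le_ofReal (hbound z hz)
      _ = ENNReal.ofReal (Real.exp C) * volume (Set.Ioc a b) := by
          rw [setLIntegral_const]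
      _ < ⊤ := by
          apply ENNReal.mul_lt_top ENNReal.ofReal_lt_top
          simp [Real.volume_Ioc]

/-- Under H1, the speed measure with density 2e^{-γ} on (0,∞) is finite;
in particular ∫₀^∞ e^{-γ(y)} dy < ∞. -/
theorem speed_measure_finite
    (q γ : ℝ → ℝ)
    (hq : ContDiffOn ℝ 1 q (Set.Ici 0))
    (hγ : ∀ y, γ y = 2 * ∫ t in (0:ℝ)..y, q t)
    (H1 : ∫⁻ y in Set.Ioi (0:ℝ),
        ENNReal.ofReal (Real.exp (γ y)) *
          ∫⁻ z in Set.Ioi y, ENNReal.ofReal (Real.exp (-(γ z))) < ⊤) :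
    (∀ y > (0:ℝ),
        ∫⁻ z in Set.Ioi y, ENNReal.ofReal (Real.exp (-(γ z))) < ⊤) ∧
    IsFiniteMeasure
      ((volume.restrict (Set.Ioi (0:ℝ))).withDensity
        (fun y => ENNReal.ofReal (2 * Real.exp (-(γ y))))) ∧
    ∫⁻ y in Set.Ioi (0:ℝ), ENNReal.ofReal (Real.exp (-(γ y))) < ⊤ := by
  set F : ℝ → ℝ≥0∞ := fun y => ∫⁻ z in Set.Ioi y, ENNReal.ofReal (Real.exp (-(γ z))) with hF
  -- Step 1: there exists y0 > 0 with F y0 < ⊤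
  have hex : ∃ y0 > (0:ℝ), F y0 < ⊤ := by
    by_contra h
    push_neg at h
    have hall : ∀ y ∈ Set.Ioi (0:ℝ), F y = ⊤ := fun y hy => top_le_iff.1 (h y hy)
    have hge : (⊤ : ℝ≥0∞) ≤ ∫⁻ y in Set.Ioi (0:ℝ),
        ENNReal.ofReal (Real.exp (γ y)) * F y := by
      calc (⊤ : ℝ≥0∞) = ∫⁻ _ in Set.Ioi (0:ℝ), (⊤ : ℝ≥0∞) := by
            rw [setLIntegral_const]
            simp [Real.volume_Ioi]
        _ ≤ _ := by
            apply setLIntegral_mono' measurableSet_Ioi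
            intro y hy
            rw [hall y hy, ENNReal.mul_top (by positivity)]
    exact absurd (lt_of_le_of_lt hge H1) (lt_irrefl _)
  obtain ⟨y0, hy0, hFy0⟩ := hex
  -- Step 2: F y < ⊤ for all y > 0
  have h1 : ∀ y > (0:ℝ), F y < ⊤ := by
    intro y hy
    rcases le_or_gt y0 y with hle | hlt
    · exact lt_of_le_of_lt (lintegral_mono_set (Set.Ioi_subset_Ioi hle)) hFy0
    · have hsplit : Set.Ioi y ⊆ Set.Ioc y y0 ∪ Set.Ioi y0 := by
        intro z hz
        rcases le_or_gt z y0 with h' | h'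
        · exact Or.inl ⟨hz, h'⟩
        · exact Or.inr h'
      calc F y ≤ ∫⁻ z in Set.Ioc y y0 ∪ Set.Ioi y0,
              ENNReal.ofReal (Real.exp (-(γ z))) := lintegral_mono_set hsplit
        _ ≤ (∫⁻ z in Set.Ioc y y0, ENNReal.ofReal (Real.exp (-(γ z)))) +
              ∫⁻ z in Set.Ioi y0, ENNReal.ofReal (Real.exp (-(γ z))) :=
            lintegral_union_le _ _ _
        _ < ⊤ := ENNReal.add_lt_top.2
            ⟨speed_aux_Ioc_lt_top q γ hq hγ hy.le, hFy0⟩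
  -- Step 3: the full integral is finite
  have h3 : ∫⁻ y in Set.Ioi (0:ℝ), ENNReal.ofReal (Real.exp (-(γ y))) < ⊤ := by
    have hsplit : Set.Ioi (0:ℝ) ⊆ Set.Ioc 0 y0 ∪ Set.Ioi y0 := by
      intro z hz
      rcases le_or_gt z y0 with h' | h'
      · exact Or.inl ⟨hz, h'⟩
      · exact Or.inr h'
    calc ∫⁻ y in Set.Ioi (0:ℝ), ENNReal.ofReal (Real.exp (-(γ y)))
        ≤ ∫⁻ y in Set.Ioc 0 y0 ∪ Set.Ioi y0,
            ENNReal.ofReal (Real.exp (-(γ y))) := lintegral_mono_set hsplit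
      _ ≤ (∫⁻ y in Set.Ioc 0 y0, ENNReal.ofReal (Real.exp (-(γ y)))) +
            ∫⁻ y in Set.Ioi y0, ENNReal.ofReal (Real.exp (-(γ y))) :=
          lintegral_union_le _ _ _
      _ < ⊤ := ENNReal.add_lt_top.2
          ⟨speed_aux_Ioc_lt_top q γ hq hγ le_rfl, hFy0⟩
  refine ⟨h1, ?_, h3⟩
  constructor
  rw [withDensity_apply _ MeasurableSet.univ, Measure.restrict_univ]
  have heq : ∀ y, ENNReal.ofReal (2 * Real.exp (-(γ y))) =
      2 * ENNReal.ofReal (Real.exp (-(γ y))) := by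
    intro y
    rw [ENNReal.ofReal_mul (by norm_num)]
    norm_num
  calc ∫⁻ y in Set.Ioi (0:ℝ), ENNReal.ofReal (2 * Real.exp (-(γ y)))
      = ∫⁻ y in Set.Ioi (0:ℝ), 2 * ENNReal.ofReal (Real.exp (-(γ y))) := by
        simp_rw [heq]
    _ = 2 * ∫⁻ y in Set.Ioi (0:ℝ), ENNReal.ofReal (Real.exp (-(γ y))) :=
        lintegral_const_mul' _ _ (by norm_num)
    _ < ⊤ := ENNReal.mul_lt_top (by norm_num) h3
end

section
/- Let H : [z₀, ∞) → (0,∞) be a C² function which is strictly decreasing, integrable at infinity, and satisfies lim_{z→∞} H(z)²/H'(z) = 0 and lim_{z→∞} H(z)H''(z)/(H'(z))² = a for some real a ≠ 2. Then lim_{z→∞} (∫_z^∞ H(y) dy) / (H(z)²/(-H'(z))) = 1/(2 - a). -/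
open MeasureTheory Real Filter Topology Set

/-! Both `∫_z^∞ H` and `H²/(-H')` tend to `0`, with derivatives `-H` and `-H (2 - H H''/H'²)`,
so L'Hôpital's rule gives the limit `1/(2 - a)`. The subtle point is that `H'` must be eventually
nonzero for `H²/(-H')` to be differentiable. Monotonicity gives `H' ≤ 0`, so zeros of `H'` are
local maxima of `H'` and the limit of `H H''/H'²` yields `H H'' ≤ (a + 1) H'²` for large `z`.
This makes `H' H^(-(a+1))` antitone, so a zero of `H'` would force `H' ≥ 0` on the whole interval
before it, contradicting the strict decrease of `H`. -/

theorem hasDerivAt_integral_Ioi {f : ℝ → ℝ} {a x : ℝ} (hf : IntegrableOn f (Ioi a))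
    (hx : a < x) (hcont : ContinuousAt f x) :
    HasDerivAt (fun z => ∫ y in Ioi z, f y) (-f x) x := by
  have hmeas : StronglyMeasurableAtFilter f (𝓝 x) :=
    ⟨Ioi a, Ioi_mem_nhds hx, hf.aestronglyMeasurable⟩
  have hii : IntervalIntegrable f volume a x :=
    (intervalIntegrable_iff_integrableOn_Ioc_of_le hx.le).2 (hf.mono_set Ioc_subset_Ioi_self)
  have hFTC := (intervalIntegral.integral_hasDerivAt_right hii hmeas hcont).const_sub
    (∫ y in Ioi a, f y)
  refine hFTC.congr_of_eventuallyEq ?_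
  filter_upwards [Ioi_mem_nhds hx] with z hz
  rw [eq_sub_iff_add_eq', intervalIntegral.integral_interval_add_Ioi hf
    (hf.mono_set (Ioi_subset_Ioi hz.le))]

theorem hasDerivAt_sq_div_neg {f g : ℝ → ℝ} {g' x : ℝ} (hf : HasDerivAt f (g x) x)
    (hg : HasDerivAt g g' x) (hgx : g x ≠ 0) :
    HasDerivAt (fun z => f z ^ 2 / -g z) (-(f x * (2 - f x * g' / g x ^ 2))) x := by
  refine ((hf.fun_pow 2).fun_div hg.fun_neg (neg_ne_zero.2 hgx)).congr_deriv ?_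
  field_simp
  ring

theorem antitoneOn_mul_rpow_neg {f f' f'' : ℝ → ℝ} {s : Set ℝ} {C : ℝ} (hs : Convex ℝ s)
    (hf : ∀ x ∈ s, HasDerivAt f (f' x) x) (hf' : ∀ x ∈ s, HasDerivAt f' (f'' x) x)
    (hpos : ∀ x ∈ s, 0 < f x) (hle : ∀ x ∈ s, f x * f'' x ≤ C * f' x ^ 2) :
    AntitoneOn (fun x => f' x * f x ^ (-C)) s := by
  have hderiv : ∀ x ∈ s, HasDerivAt (fun x => f' x * f x ^ (-C))
      (f x ^ (-C - 1) * (f x * f'' x - C * f' x ^ 2)) x := by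
    intro x hx
    refine ((hf' x hx).mul ((hf x hx).rpow_const (Or.inl (hpos x hx).ne'))).congr_deriv ?_
    rw [rpow_sub (hpos x hx), rpow_one]
    field_simp [(hpos x hx).ne']
    ring
  refine antitoneOn_of_hasDerivWithinAt_nonpos hs
    (fun x hx => (hderiv x hx).continuousAt.continuousWithinAt)
    (fun x hx => (hderiv x (interior_subset hx)).hasDerivWithinAt) fun x hx => ?_
  have hx := interior_subset hx
  exact mul_nonpos_of_nonneg_of_nonpos (rpow_nonneg (hpos x hx).le _)
    (sub_nonpos.2 (hle x hx))

theorem ContDiffOn.hasDerivAt_deriv {f : ℝ → ℝ} {s : Set ℝ} {x : ℝ}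
    (hf : ContDiffOn ℝ 2 f s) (hx : s ∈ 𝓝 x) : HasDerivAt (deriv f) (deriv (deriv f) x) x := by
  have hx' : interior s ∈ 𝓝 x := isOpen_interior.mem_nhds (mem_interior_iff_mem_nhds.2 hx)
  have hf' : ContDiffOn ℝ 1 (deriv f) (interior s) :=
    (hf.mono interior_subset).deriv_of_isOpen isOpen_interior (by norm_num)
  exact ((hf'.differentiableOn one_ne_zero).differentiableAt hx').hasDerivAt

theorem AntitoneOn.deriv_nonpos_of_mem_nhds {f : ℝ → ℝ} {s : Set ℝ} {x : ℝ}
    (hf : AntitoneOn f s) (hx : s ∈ 𝓝 x) : deriv f x ≤ 0 := by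
  rw [← derivWithin_of_mem_nhds hx]
  exact hf.derivWithin_nonpos

theorem eventually_mul_deriv_deriv_le {f : ℝ → ℝ} {a : ℝ}
    (hf : ∀ᶠ x in atTop, deriv f x ≤ 0)
    (hlim : Tendsto (fun x => f x * deriv (deriv f) x / deriv f x ^ 2) atTop (𝓝 a)) :
    ∀ᶠ x in atTop, f x * deriv (deriv f) x ≤ (a + 1) * deriv f x ^ 2 := by
  obtain ⟨b, hb⟩ := eventually_atTop.1 hf
  filter_upwards [hlim.eventually (gt_mem_nhds (lt_add_one a)), eventually_gt_atTop b]
    with x hlt hbx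
  by_cases h0 : deriv f x = 0
  · have hmax : IsLocalMax (deriv f) x := by
      filter_upwards [Ioi_mem_nhds hbx] with y hy
      rw [h0]
      exact hb y hy.le
    simp [h0, hmax.deriv_eq_zero]
  · exact ((div_lt_iff₀ (by positivity)).1 hlt).le

theorem eventually_deriv_neg {H : ℝ → ℝ} {z₀ a : ℝ} (hpos : ∀ z ∈ Ici z₀, 0 < H z)
    (hanti : StrictAntiOn H (Ici z₀)) (hC2 : ContDiffOn ℝ 2 H (Ici z₀))
    (hlim : Tendsto (fun z => H z * deriv (deriv H) z / deriv H z ^ 2) atTop (𝓝 a)) :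
    ∀ᶠ z in atTop, deriv H z < 0 := by
  have hd : ∀ x > z₀, HasDerivAt H (deriv H x) x := fun x hx =>
    ((hC2.differentiableOn two_ne_zero).differentiableAt (Ici_mem_nhds hx)).hasDerivAt
  have hnonpos : ∀ᶠ x in atTop, deriv H x ≤ 0 := by
    filter_upwards [eventually_gt_atTop z₀] with x hx
    exact hanti.antitoneOn.deriv_nonpos_of_mem_nhds (Ici_mem_nhds hx)
  obtain ⟨b, hb⟩ := eventually_atTop.1
    ((eventually_mul_deriv_deriv_le hnonpos hlim).and (eventually_gt_atTop z₀))
  have hQ : AntitoneOn (fun x => deriv H x * H x ^ (-(a + 1))) (Ici b) :=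
    antitoneOn_mul_rpow_neg (convex_Ici b) (fun x hx => hd x (hb x hx).2)
      (fun x hx => hC2.hasDerivAt_deriv (Ici_mem_nhds (hb x hx).2))
      (fun x hx => hpos x (hb x hx).2.le) (fun x hx => (hb x hx).1)
  filter_upwards [eventually_gt_atTop b] with x hbx
  by_contra! hx0
  have hbz₀ := (hb b le_rfl).2
  obtain ⟨c, hc, hcslope⟩ := exists_hasDerivAt_eq_slope H (deriv H) hbx
    (hC2.continuousOn.mono (Icc_subset_Ici_self.trans (Ici_subset_Ici.2 hbz₀.le)))
    (fun y hy => hd y (hbz₀.trans hy.1))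
  have hc0 : deriv H c < 0 := by
    rw [hcslope]
    exact div_neg_of_neg_of_pos (sub_neg.2 (hanti hbz₀.le (hbz₀.trans hbx).le hbx))
      (sub_pos.2 hbx)
  have hQc : deriv H x * H x ^ (-(a + 1)) ≤ deriv H c * H c ^ (-(a + 1)) :=
    hQ hc.1.le hbx.le hc.2.le
  have hHc := rpow_pos_of_pos (hpos c (hbz₀.trans hc.1).le) (-(a + 1))
  have hHx := rpow_pos_of_pos (hpos x (hbz₀.trans hbx).le) (-(a + 1))
  exact (mul_neg_of_neg_of_pos hc0 hHc).not_ge ((mul_nonneg hx0 hHx.le).trans hQc)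

/-- L'Hôpital-type lemma: if H > 0 is C², strictly decreasing, integrable at ∞,
H²/H' → 0 and H·H''/(H')² → a ≠ 2, then
(∫_z^∞ H)/(H(z)²/(-H'(z))) → 1/(2-a). -/
theorem lhopital_tail_integral
    (H : ℝ → ℝ) (z₀ a : ℝ) (ha : a ≠ 2)
    (hpos : ∀ z ∈ Set.Ici z₀, 0 < H z)
    (hanti : StrictAntiOn H (Set.Ici z₀))
    (hC2 : ContDiffOn ℝ 2 H (Set.Ici z₀))
    (hint : IntegrableOn H (Set.Ici z₀))
    (h1 : Tendsto (fun z => H z ^ 2 / deriv H z) atTop (nhds 0))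
    (h2 : Tendsto (fun z => H z * deriv (deriv H) z / (deriv H z) ^ 2)
        atTop (nhds a)) :
    Tendsto (fun z => (∫ y in Set.Ioi z, H y) / (H z ^ 2 / (-(deriv H z))))
      atTop (nhds (1 / (2 - a))) := by
  set r := fun z => H z * deriv (deriv H) z / deriv H z ^ 2
  have h2a : 2 - a ≠ 0 := sub_ne_zero.2 ha.symm
  have hF : ∀ᶠ z in atTop, HasDerivAt (fun z => ∫ y in Ioi z, H y) (-H z) z := by
    filter_upwards [eventually_gt_atTop z₀] with z hz
    exact hasDerivAt_integral_Ioi (hint.mono_set Ioi_subset_Ici_self) hz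
      (hC2.continuousOn.continuousAt (Ici_mem_nhds hz))
  have hG : ∀ᶠ z in atTop,
      HasDerivAt (fun z => H z ^ 2 / -deriv H z) (-(H z * (2 - r z))) z := by
    filter_upwards [eventually_gt_atTop z₀, eventually_deriv_neg hpos hanti hC2 h2]
      with z hz hneg
    exact hasDerivAt_sq_div_neg
      ((hC2.differentiableOn two_ne_zero).differentiableAt (Ici_mem_nhds hz)).hasDerivAt
      (hC2.hasDerivAt_deriv (Ici_mem_nhds hz)) hneg.ne
  have hG' : ∀ᶠ z in atTop, -(H z * (2 - r z)) ≠ 0 := by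
    filter_upwards [eventually_ge_atTop z₀, (tendsto_const_nhds.sub h2).eventually_ne h2a]
      with z hz hrz
    exact neg_ne_zero.2 (mul_ne_zero (hpos z hz).ne' hrz)
  have hdiv : Tendsto (fun z => -H z / -(H z * (2 - r z))) atTop (𝓝 (1 / (2 - a))) := by
    rw [one_div]
    refine ((tendsto_const_nhds.sub h2).inv₀ h2a).congr' ?_
    filter_upwards [eventually_ge_atTop z₀] with z hz
    rw [neg_div_neg_eq, div_mul_cancel_left₀ (hpos z hz).ne']
  have hG0 : Tendsto (fun z => H z ^ 2 / -deriv H z) atTop (𝓝 0) := by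
    simpa only [div_neg, neg_zero] using h1.neg
  exact HasDerivAt.lhopital_zero_atTop hF hG hG' (tendsto_integral_Ioi_zero tendsto_id) hG0 hdiv
end

section
/- Suppose H1 and H2 hold. Then for x ≥ x₁ large enough (so that q is bounded below on [x,∞) by a q(x) with a > 0, assumption H3), the principal Dirichlet eigenvalue λ₁(x) of the operator u ↦ -(u''/2 - q u') on [x,∞) satisfies λ₁(x) ≥ (max(inf{q(y) : y ≥ x}, 0))²/2. -/
/-!
The ground-state transform `φ = ψ e^{-γ/2}` turns the eigenvalue equation into
`φ'' = (q² - q' - 2λ) φ`, with `φ(x) = 0`, `φ > 0` and `φ ∈ L²`. Completing a square gives, for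
`M = max(inf q, 0)` and every `b ≥ x`, the Hardy-type bound
`(M² - 2λ) ∫_x^b φ² ≤ φ(b) (φ'(b) + q(b) φ(b))`.
If `λ < M²/2`, the right-hand side therefore stays above a positive constant. On the other hand,
H2 makes the potential `q² - q' - 2λ` eventually nonnegative and at least `q²/2 - 2λ`: a positive
square-integrable solution is then eventually decreasing, `(φ φ')' ≥ (q² - q' - 2λ) φ²` makes
`q² φ²` integrable, and so `φ φ' + q φ² ≤ q² φ²` gets arbitrarily small.
-/

open MeasureTheory Real Filter Set Topology

theorem max_sInf_image_sq_le_mul {α : Type*} {f : α → ℝ} {s : Set α} {y : α} (hy : y ∈ s) :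
    max (sInf (f '' s)) 0 ^ 2 ≤ max (sInf (f '' s)) 0 * f y := by
  by_cases hbdd : BddBelow (f '' s)
  · have hle : sInf (f '' s) ≤ f y := csInf_le hbdd (mem_image_of_mem f hy)
    rcases le_total (sInf (f '' s)) 0 with h | h
    · simp [max_eq_right h]
    · rw [max_eq_left h, sq]
      exact mul_le_mul_of_nonneg_left hle h
  · simp [Real.sInf_of_not_bddBelow hbdd]

theorem exists_lt_of_integrableOn_Ioi {f : ℝ → ℝ} {a ε : ℝ} (hf : IntegrableOn f (Ioi a))
    (hε : 0 < ε) : ∃ y > a, f y < ε := by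
  by_contra! hge
  have hconst : IntegrableOn (fun _ => ε) (Ioi a) := by
    refine hf.mono' aestronglyMeasurable_const ?_
    filter_upwards [ae_restrict_mem measurableSet_Ioi] with y hy
    rw [Real.norm_of_nonneg hε.le]
    exact hge y hy
  simp [integrableOn_const_iff, hε.ne'] at hconst

theorem eventually_le_const_mul_of_tendsto_div {α : Type*} {l : Filter α} {f g : α → ℝ}
    (hfg : Tendsto (fun t => f t / g t) l (𝓝 0)) (hg : ∀ᶠ t in l, 0 < g t) {c : ℝ}
    (hc : 0 < c) : ∀ᶠ t in l, f t ≤ c * g t := by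
  filter_upwards [hfg.eventually (gt_mem_nhds hc), hg] with t hlt hgt
  exact ((div_lt_iff₀ hgt).1 hlt).le

theorem sq_sub_two_mul_mul_integral_sq_le {φ φ' q q' : ℝ → ℝ} {a b M lam : ℝ} (hab : a ≤ b)
    (hφ : ContinuousOn φ (Icc a b)) (hφ' : ContinuousOn φ' (Icc a b))
    (hq : ContinuousOn q (Icc a b)) (hφd : ∀ y ∈ Ioo a b, HasDerivAt φ (φ' y) y)
    (hφ'd : ∀ y ∈ Ioo a b, HasDerivAt φ' ((q y ^ 2 - q' y - 2 * lam) * φ y) y)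
    (hqd : ∀ y ∈ Ioo a b, HasDerivAt q (q' y) y) (hqM : ∀ y ∈ Ioo a b, M ^ 2 ≤ M * q y)
    (ha : φ a = 0) :
    (M ^ 2 - 2 * lam) * ∫ y in a..b, φ y ^ 2 ≤ φ b * (φ' b + (q b - M) * φ b) := by
  rw [← intervalIntegral.integral_const_mul]
  -- with `G := φ * (φ' + (q - M) * φ)`, one has
  -- `G' - (M² - 2λ) φ² = (φ' + (q - M) φ)² + 2 (M q - M²) φ² ≥ 0`
  have hG := intervalIntegral.integral_le_sub_of_hasDeriv_right_of_le hab
    (g := fun y => φ y * (φ' y + (q y - M) * φ y))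
    (g' := fun y => (φ' y + q y * φ y) ^ 2 - 2 * lam * φ y ^ 2 - 2 * M * φ y * φ' y)
    (hφ.mul (hφ'.add ((hq.sub continuousOn_const).mul hφ)))
    (fun y hy => by
      refine (((hφd y hy).fun_mul ((hφ'd y hy).fun_add
        (((hqd y hy).sub_const M).fun_mul (hφd y hy)))).congr_deriv ?_).hasDerivWithinAt
      ring)
    (φ := fun y => (M ^ 2 - 2 * lam) * φ y ^ 2)
    ((continuousOn_const.mul (hφ.pow 2)).integrableOn_Icc)
    (fun y hy => by nlinarith [sq_nonneg (φ' y + (q y - M) * φ y), sq_nonneg (φ y),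
      mul_le_mul_of_nonneg_right (hqM y hy) (sq_nonneg (φ y))])
  simpa [ha] using hG

theorem deriv_neg_of_integrableOn_sq {φ φ' V : ℝ → ℝ} {a : ℝ}
    (hφd : ∀ y > a, HasDerivAt φ (φ' y) y) (hφ'd : ∀ y > a, HasDerivAt φ' (V y * φ y) y)
    (hV : ∀ y > a, 0 ≤ V y) (hpos : ∀ y > a, 0 < φ y)
    (hL2 : IntegrableOn (fun y => φ y ^ 2) (Ioi a)) : ∀ y > a, φ' y < 0 := by
  intro y₀ hy₀
  by_contra! hφ'y₀
  have hφ'mono : MonotoneOn φ' (Ioi a) :=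
    monotoneOn_of_hasDerivWithinAt_nonneg (convex_Ioi a)
      (fun y hy => (hφ'd y hy).continuousAt.continuousWithinAt)
      (fun y hy => (hφ'd y (interior_subset hy)).hasDerivWithinAt)
      (fun y hy => mul_nonneg (hV y (interior_subset hy)) (hpos y (interior_subset hy)).le)
  have hφmono : MonotoneOn φ (Ici y₀) :=
    monotoneOn_of_hasDerivWithinAt_nonneg (convex_Ici y₀)
      (fun y hy => (hφd y (hy₀.trans_le hy)).continuousAt.continuousWithinAt)
      (fun y hy => (hφd y (hy₀.trans_le (interior_subset hy))).hasDerivWithinAt)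
      (fun y hy => by
        rw [interior_Ici] at hy
        exact hφ'y₀.trans (hφ'mono hy₀ (hy₀.trans hy) hy.le))
  obtain ⟨y, hy, hlt⟩ := exists_lt_of_integrableOn_Ioi (hL2.mono_set (Ioi_subset_Ioi hy₀.le))
    (pow_pos (hpos y₀ hy₀) 2)
  have hle : φ y₀ ≤ φ y := hφmono self_mem_Ici (mem_Ici.2 hy.le) hy.le
  nlinarith [hpos y₀ hy₀]

theorem integrableOn_mul_sq_of_deriv_neg {φ φ' V : ℝ → ℝ} {a : ℝ}
    (hV : ContinuousOn V (Ici a)) (hφ : ContinuousOn φ (Ici a)) (hφ' : ContinuousOn φ' (Ici a))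
    (hφd : ∀ y > a, HasDerivAt φ (φ' y) y) (hφ'd : ∀ y > a, HasDerivAt φ' (V y * φ y) y)
    (hV0 : ∀ y > a, 0 ≤ V y) (hpos : ∀ y > a, 0 < φ y) (hneg : ∀ y > a, φ' y < 0) :
    IntegrableOn (fun y => V y * φ y ^ 2) (Ioi a) := by
  have hcont : ContinuousOn (fun y => V y * φ y ^ 2) (Ici a) := hV.mul (hφ.pow 2)
  refine integrableOn_Ioi_of_intervalIntegral_norm_bounded (-(φ a * φ' a)) a (b := id)
    (l := atTop) (fun b => ?_) tendsto_id ?_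
  · exact ((hcont.mono Icc_subset_Ici_self).integrableOn_Icc).mono_set Ioc_subset_Icc_self
  filter_upwards [eventually_gt_atTop a] with b hb
  -- `(φ φ')' = φ'² + V φ² ≥ |V φ²|` and `φ φ' < 0` on `(a, ∞)`
  have hflux := intervalIntegral.integral_le_sub_of_hasDeriv_right_of_le hb.le
    (g := fun y => φ y * φ' y) (g' := fun y => φ' y ^ 2 + V y * φ y ^ 2)
    ((hφ.mul hφ').mono Icc_subset_Ici_self)
    (fun y hy => (((hφd y hy.1).fun_mul (hφ'd y hy.1)).congr_deriv (by ring)).hasDerivWithinAt)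
    (((hcont.mono Icc_subset_Ici_self).integrableOn_Icc).norm)
    (fun y hy => by
      rw [Real.norm_of_nonneg (mul_nonneg (hV0 y hy.1) (sq_nonneg _))]
      nlinarith [sq_nonneg (φ' y)])
  have hφφ' : φ b * φ' b < 0 := mul_neg_of_pos_of_neg (hpos b hb) (hneg b hb)
  simp only [id]
  linarith

theorem eventually_one_le_and_potential_bounds {q q' : ℝ → ℝ} (lam : ℝ)
    (H2a : Tendsto q atTop atTop) (H2b : Tendsto (fun t => q' t / q t ^ 2) atTop (𝓝 0)) :
    ∀ᶠ y in atTop, 1 ≤ q y ∧ 0 ≤ q y ^ 2 - q' y - 2 * lam ∧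
      q y ^ 2 ≤ 2 * (q y ^ 2 - q' y - 2 * lam) + 4 * |lam| := by
  filter_upwards [H2a.eventually_ge_atTop (max 1 (4 * |lam|)),
    eventually_le_const_mul_of_tendsto_div H2b
      ((H2a.eventually_gt_atTop 0).mono fun t ht => pow_pos ht 2) one_half_pos] with y hq hq'
  have h1 : 1 ≤ q y := (le_max_left _ _).trans hq
  have h4 : 4 * |lam| ≤ q y := (le_max_right _ _).trans hq
  refine ⟨h1, ?_, ?_⟩ <;> nlinarith [le_abs_self lam, neg_abs_le lam]

theorem exists_ge_mul_deriv_add_mul_lt {q φ φ' : ℝ → ℝ} {x lam ε : ℝ} (hq : ContDiff ℝ 1 q)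
    (H2a : Tendsto q atTop atTop)
    (H2b : Tendsto (fun t => deriv q t / q t ^ 2) atTop (𝓝 0))
    (hφ : ContinuousOn φ (Ici x)) (hφ' : ContinuousOn φ' (Ici x))
    (hφd : ∀ y > x, HasDerivAt φ (φ' y) y)
    (hφ'd : ∀ y > x, HasDerivAt φ' ((q y ^ 2 - deriv q y - 2 * lam) * φ y) y)
    (hpos : ∀ y > x, 0 < φ y) (hL2 : IntegrableOn (fun y => φ y ^ 2) (Ioi x))
    (hε : 0 < ε) (N : ℝ) : ∃ b ≥ N, φ b * (φ' b + q b * φ b) < ε := by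
  set V := fun y => q y ^ 2 - deriv q y - 2 * lam
  obtain ⟨Y, hY⟩ := eventually_atTop.1 (eventually_one_le_and_potential_bounds lam H2a H2b)
  set a := max Y (max x N)
  have hxa : x ≤ a := (le_max_left _ _).trans (le_max_right _ _)
  have hqV : ∀ y > a, 1 ≤ q y ∧ 0 ≤ V y ∧ q y ^ 2 ≤ 2 * V y + 4 * |lam| := fun y hy =>
    hY y ((le_max_left _ _).trans hy.le)
  have hneg : ∀ y > a, φ' y < 0 :=
    deriv_neg_of_integrableOn_sq (fun y hy => hφd y (hxa.trans_lt hy))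
      (fun y hy => hφ'd y (hxa.trans_lt hy)) (fun y hy => (hqV y hy).2.1)
      (fun y hy => hpos y (hxa.trans_lt hy)) (hL2.mono_set (Ioi_subset_Ioi hxa))
  have hVint : IntegrableOn (fun y => V y * φ y ^ 2) (Ioi a) :=
    integrableOn_mul_sq_of_deriv_neg
      (((hq.continuous.pow 2).sub (hq.continuous_deriv le_rfl)).sub continuous_const).continuousOn
      (hφ.mono (Ici_subset_Ici.2 hxa)) (hφ'.mono (Ici_subset_Ici.2 hxa))
      (fun y hy => hφd y (hxa.trans_lt hy)) (fun y hy => hφ'd y (hxa.trans_lt hy))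
      (fun y hy => (hqV y hy).2.1) (fun y hy => hpos y (hxa.trans_lt hy)) hneg
  have hq2int : IntegrableOn (fun y => q y ^ 2 * φ y ^ 2) (Ioi a) := by
    refine (hVint.const_mul 2).add ((hL2.mono_set (Ioi_subset_Ioi hxa)).const_mul (4 * |lam|))
      |>.mono' ?_ ?_
    · exact ((hq.continuous.pow 2).continuousOn.mul ((hφ.mono (Ici_subset_Ici.2 hxa)).pow 2)
        |>.mono Ioi_subset_Ici_self).aestronglyMeasurable measurableSet_Ioi
    · filter_upwards [ae_restrict_mem measurableSet_Ioi] with y hy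
      rw [Real.norm_of_nonneg (by positivity), Pi.add_apply]
      nlinarith [mul_le_mul_of_nonneg_right (hqV y hy).2.2 (sq_nonneg (φ y))]
  obtain ⟨b, hb, hlt⟩ := exists_lt_of_integrableOn_Ioi hq2int hε
  refine ⟨b, ((le_max_right _ _).trans (le_max_right _ _)).trans hb.le, ?_⟩
  have hφb := hpos b (hxa.trans_lt hb)
  calc φ b * (φ' b + q b * φ b) ≤ q b * φ b ^ 2 := by nlinarith [hneg b hb]
    _ ≤ q b ^ 2 * φ b ^ 2 := by gcongr; nlinarith [(hqV b hb).1]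
    _ < ε := hlt

theorem max_sInf_sq_div_two_le_of_pos_solution {q φ φ' : ℝ → ℝ} {x lam : ℝ}
    (hq : ContDiff ℝ 1 q) (H2a : Tendsto q atTop atTop)
    (H2b : Tendsto (fun t => deriv q t / q t ^ 2) atTop (𝓝 0))
    (hφ : ContinuousOn φ (Ici x)) (hφ' : ContinuousOn φ' (Ici x))
    (hφd : ∀ y > x, HasDerivAt φ (φ' y) y)
    (hφ'd : ∀ y > x, HasDerivAt φ' ((q y ^ 2 - deriv q y - 2 * lam) * φ y) y)
    (hφ0 : φ x = 0) (hpos : ∀ y > x, 0 < φ y) (hL2 : IntegrableOn (fun y => φ y ^ 2) (Ioi x)) :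
    max (sInf (q '' Ici x)) 0 ^ 2 / 2 ≤ lam := by
  set M := max (sInf (q '' Ici x)) 0
  by_contra! hlam
  have hc : 0 < M ^ 2 - 2 * lam := by linarith
  have hbound : ∀ b ≥ x,
      (M ^ 2 - 2 * lam) * ∫ y in x..b, φ y ^ 2 ≤ φ b * (φ' b + q b * φ b) := by
    intro b hb
    have h := sq_sub_two_mul_mul_integral_sq_le hb (hφ.mono Icc_subset_Ici_self)
      (hφ'.mono Icc_subset_Ici_self) hq.continuous.continuousOn
      (fun y hy => hφd y hy.1) (fun y hy => hφ'd y hy.1)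
      (fun y _ => (hq.differentiable one_ne_zero y).hasDerivAt)
      (fun y hy => max_sInf_image_sq_le_mul (mem_Ici.2 hy.1.le)) hφ0
    nlinarith [mul_nonneg (le_max_right (sInf (q '' Ici x)) 0) (sq_nonneg (φ b))]
  have hint : ∀ b ≥ x, IntervalIntegrable (fun y => φ y ^ 2) volume x b := fun b hb =>
    ((hφ.pow 2).mono Icc_subset_Ici_self).intervalIntegrable_of_Icc hb
  have hI : 0 < ∫ y in x..x + 1, φ y ^ 2 :=
    intervalIntegral.intervalIntegral_pos_of_pos_on (hint _ (by linarith))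
      (fun y hy => pow_pos (hpos y hy.1) 2) (by linarith)
  obtain ⟨b, hb, hlt⟩ := exists_ge_mul_deriv_add_mul_lt hq H2a H2b hφ hφ' hφd hφ'd hpos hL2
    (mul_pos hc hI) (x + 1)
  have hmono : ∫ y in x..x + 1, φ y ^ 2 ≤ ∫ y in x..b, φ y ^ 2 :=
    intervalIntegral.integral_mono_interval le_rfl (by linarith) hb
      (Eventually.of_forall fun y => sq_nonneg (φ y)) (hint b (by linarith))
  nlinarith [hbound b (by linarith)]

theorem hasDerivAt_mul_exp_neg_half {f γ q : ℝ → ℝ} {f' y : ℝ} (hf : HasDerivAt f f' y)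
    (hγ : HasDerivAt γ (2 * q y) y) :
    HasDerivAt (fun y => f y * exp (-γ y / 2)) ((f' - q y * f y) * exp (-γ y / 2)) y :=
  (hf.fun_mul (hγ.fun_neg.div_const 2).exp).congr_deriv (by ring)

theorem hasDerivAt_derivWithin_Ici {f : ℝ → ℝ} {x y : ℝ} (hf : DifferentiableOn ℝ f (Ici x))
    (hy : x < y) : HasDerivAt f (derivWithin f (Ici x) y) y := by
  rw [derivWithin_of_mem_nhds (Ici_mem_nhds hy)]
  exact (hf.differentiableAt (Ici_mem_nhds hy)).hasDerivAt

theorem hasDerivAt_derivWithin_Ici_deriv_deriv {f : ℝ → ℝ} {x y : ℝ}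
    (hf : ContDiffOn ℝ 2 f (Ici x)) (hy : x < y) :
    HasDerivAt (derivWithin f (Ici x)) (deriv (deriv f) y) y := by
  have hf' : derivWithin f (Ici x) =ᶠ[𝓝 y] deriv f :=
    eventually_of_mem (Ioi_mem_nhds hy) fun z hz => derivWithin_of_mem_nhds (Ici_mem_nhds hz)
  rw [← hf'.deriv_eq, ← derivWithin_of_mem_nhds (Ici_mem_nhds hy)]
  exact hasDerivAt_derivWithin_Ici
    ((hf.derivWithin (uniqueDiffOn_Ici x) (by norm_num)).differentiableOn one_ne_zero) hy

theorem principal_eigenvalue_lower_bound_general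
    (q γ : ℝ → ℝ)
    (hq : ContDiff ℝ 1 q)
    (hγ : ∀ y, γ y = 2 * ∫ t in (0:ℝ)..y, q t)
    (H2a : Tendsto q atTop atTop)
    (H2b : Tendsto (fun t => deriv q t / q t ^ 2) atTop (nhds 0))
    (x : ℝ)
    (lam : ℝ) (ψ : ℝ → ℝ)
    (hψC2 : ContDiffOn ℝ 2 ψ (Set.Ici x))
    (hψ0 : ψ x = 0)
    (hψpos : ∀ y > x, 0 < ψ y)
    (hψL2 : IntegrableOn (fun y => ψ y ^ 2 * Real.exp (-(γ y))) (Set.Ici x))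
    (heig : ∀ y ≥ x,
        (1 / 2) * deriv (deriv ψ) y - q y * deriv ψ y = -lam * ψ y) :
    (max (sInf (q '' Set.Ici x)) 0) ^ 2 / 2 ≤ lam := by
  have hγd : ∀ y, HasDerivAt γ (2 * q y) y := fun y => by
    rw [show γ = fun y => 2 * ∫ t in (0:ℝ)..y, q t from funext hγ]
    exact (hq.continuous.integral_hasStrictDerivAt 0 y).hasDerivAt.const_mul 2
  have hE : Continuous fun y => exp (-γ y / 2) := continuous_exp.comp
    ((continuous_iff_continuousAt.2 fun y => (hγd y).continuousAt).neg.div_const 2)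
  set g := derivWithin ψ (Ici x)
  have hg : ContDiffOn ℝ 1 g (Ici x) := hψC2.derivWithin (uniqueDiffOn_Ici x) (by norm_num)
  have hψd : ∀ y > x, HasDerivAt ψ (g y) y := fun y hy =>
    hasDerivAt_derivWithin_Ici (hψC2.differentiableOn (by norm_num)) hy
  have hgd : ∀ y > x, HasDerivAt g (2 * (q y * g y - lam * ψ y)) y := fun y hy => by
    have h := heig y hy.le
    rw [← derivWithin_of_mem_nhds (f := ψ) (Ici_mem_nhds hy)] at h
    exact (hasDerivAt_derivWithin_Ici_deriv_deriv hψC2 hy).congr_deriv (by linarith)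
  refine max_sInf_sq_div_two_le_of_pos_solution hq H2a H2b
    (φ := fun y => ψ y * exp (-γ y / 2)) (φ' := fun y => (g y - q y * ψ y) * exp (-γ y / 2))
    (hψC2.continuousOn.mul hE.continuousOn)
    ((hg.continuousOn.sub (hq.continuous.continuousOn.mul hψC2.continuousOn)).mul
      hE.continuousOn)
    (fun y hy => hasDerivAt_mul_exp_neg_half (hψd y hy) (hγd y))
    (fun y hy => ((hasDerivAt_mul_exp_neg_half ((hgd y hy).fun_sub
      ((hq.differentiable one_ne_zero y).hasDerivAt.fun_mul (hψd y hy))) (hγd y)).congr_deriv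
      (by ring)))
    (by simp [hψ0]) (fun y hy => mul_pos (hψpos y hy) (exp_pos _)) ?_
  refine (hψL2.mono_set Ioi_subset_Ici_self).congr_fun (fun y _ => ?_) measurableSet_Ioi
  rw [mul_pow, ← exp_nat_mul]
  ring_nf

/-- Under H1 and H2, if ψ is a positive Dirichlet eigenfunction on [x,∞) of
u ↦ -(u''/2 - q u') with eigenvalue λ (i.e. the principal eigenvalue λ₁(x)),
then λ ≥ (max(inf{q(y) : y ≥ x}, 0))²/2. -/
theorem principal_eigenvalue_lower_bound
    (q γ : ℝ → ℝ)
    (hq : ContDiff ℝ 1 q)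
    (hγ : ∀ y, γ y = 2 * ∫ t in (0:ℝ)..y, q t)
    (H1 : ∫⁻ y in Set.Ioi (0:ℝ),
        ENNReal.ofReal (Real.exp (γ y)) *
          ∫⁻ z in Set.Ioi y, ENNReal.ofReal (Real.exp (-(γ z))) < ⊤)
    (H2a : Tendsto q atTop atTop)
    (H2b : Tendsto (fun t => deriv q t / q t ^ 2) atTop (nhds 0))
    (x : ℝ) (hx : 0 ≤ x)
    (lam : ℝ) (ψ : ℝ → ℝ)
    (hψC2 : ContDiffOn ℝ 2 ψ (Set.Ici x))
    (hψ0 : ψ x = 0)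
    (hψpos : ∀ y > x, 0 < ψ y)
    (hψL2 : IntegrableOn (fun y => ψ y ^ 2 * Real.exp (-(γ y))) (Set.Ici x))
    (heig : ∀ y ≥ x,
        (1 / 2) * deriv (deriv ψ) y - q y * deriv ψ y = -lam * ψ y) :
    (max (sInf (q '' Set.Ici x)) 0) ^ 2 / 2 ≤ lam :=
  principal_eigenvalue_lower_bound_general q γ hq hγ H2a H2b x lam ψ hψC2 hψ0 hψpos hψL2 heig
end

section
/- Assume H1 and H2, and let m(z) = 2∫_z^∞ e^{γ(y)}∫_y^∞ e^{-γ(ξ)}dξ dy. Then lim_{z→∞} (4∫_z^∞ e^{γ(y)} ∫_y^∞ m(ξ) e^{-γ(ξ)} dξ dy) / m(z)² = 1; consequently, defining m₂(z) = 2m(z)² - 4∫_z^∞ e^{γ(y)}∫_y^∞ m(ξ)e^{-γ(ξ)}dξ dy, one has m₂(z)/m(z)² → 1 as z → ∞. -/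
/-!
Write `G y = ∫_y^∞ e^{-γ}` and `h = e^γ G`, so that `m = 2 ∫_z^∞ h`, `h' = γ' h - 1` and
`m' = -2 h`. L'Hôpital's rule against `e^{-γ} / γ'` gives `γ' h → 1`; this is where
`q' / q² → 0` enters. Three more applications give in turn `h² / m → 0` (derivative ratio
`1 - γ' h`), `F / (m G) → 1` for `F y = ∫_y^∞ m e^{-γ}` (derivative ratio
`(1 + 2 h² / m)⁻¹`), and `4 ∫_z^∞ e^γ F / m² → 1` (derivative ratio `F / (m G)`).
-/

open MeasureTheory Real Filter Set Topology Asymptotics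

section IntegralIoi

variable {f : ℝ → ℝ}

theorem Continuous.integrableOn_Ioi (hf : Continuous f) (hfi : IntegrableAtFilter f atTop)
    (a : ℝ) : IntegrableOn f (Ioi a) :=
  (integrableOn_Ici_iff_integrableAtFilter_atTop.2
    ⟨hfi, hf.locallyIntegrable.locallyIntegrableOn _⟩).mono_set Ioi_subset_Ici_self

theorem hasDerivAt_integral_Ioi_s17 (hf : Continuous f) (hfi : IntegrableAtFilter f atTop)
    (x : ℝ) : HasDerivAt (fun x => ∫ t in Ioi x, f t) (-f x) x := by
  have hsplit :
      (fun x => ∫ t in Ioi x, f t) = fun x => (∫ t in Ioi 0, f t) - ∫ t in 0..x, f t :=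
    funext fun x => by
      rw [← intervalIntegral.integral_Ioi_sub_Ioi' (hf.integrableOn_Ioi hfi 0)
        (hf.integrableOn_Ioi hfi x), sub_sub_cancel]
  rw [hsplit]
  exact ((hf.integral_hasStrictDerivAt 0 x).hasDerivAt).const_sub _

theorem tendsto_integral_Ioi_atTop (hfi : IntegrableAtFilter f atTop) :
    Tendsto (fun x => ∫ t in Ioi x, f t) atTop (𝓝 0) := by
  obtain ⟨s, hs, hfs⟩ := hfi
  obtain ⟨a, ha⟩ := mem_atTop_sets.1 hs
  have h := tendsto_setIntegral_of_antitone (μ := volume) (f := f) (fun _ => measurableSet_Ioi)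
    (fun _ _ hxy => Ioi_subset_Ioi hxy) ⟨a, hfs.mono_set fun x hx => ha x (le_of_lt hx)⟩
  have hempty : ⋂ x : ℝ, Ioi x = ∅ := iInter_eq_empty_iff.2 fun x => ⟨x, lt_irrefl x⟩
  rwa [hempty, Measure.restrict_empty, integral_zero_measure] at h

theorem integral_Ioi_pos (hf : ∀ x, 0 < f x) {a : ℝ} (hfi : IntegrableOn f (Ioi a)) :
    0 < ∫ t in Ioi a, f t := by
  rw [setIntegral_pos_iff_support_of_nonneg_ae (ae_of_all _ fun x => (hf x).le) hfi,
    Function.support_eq_univ fun x => (hf x).ne', univ_inter, Real.volume_Ioi]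
  exact ENNReal.zero_lt_top

end IntegralIoi

theorem tendsto_atTop_of_hasDerivAt_of_tendsto_atTop {f f' : ℝ → ℝ}
    (hf : ∀ x, HasDerivAt f (f' x) x) (hf' : Tendsto f' atTop atTop) :
    Tendsto f atTop atTop := by
  obtain ⟨T, hT⟩ := eventually_atTop.1 (hf'.eventually_ge_atTop 1)
  have hgrowth : ∀ y ≥ T, f T + (y - T) ≤ f y := fun y hy => by
    have := (convex_Ici T).mul_sub_le_image_sub_of_le_deriv
      (fun x _ => (hf x).continuousAt.continuousWithinAt)
      (fun x _ => (hf x).differentiableAt.differentiableWithinAt)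
      (fun x hx => (hf x).deriv ▸ hT x (interior_Ici.subset hx).le)
      T (mem_Ici.2 le_rfl) y hy hy
    linarith
  refine tendsto_atTop_mono' atTop (eventually_atTop.2 ⟨T, hgrowth⟩) ?_
  exact tendsto_atTop_add_const_left _ _ (tendsto_atTop_add_const_right _ _ tendsto_id)

theorem Filter.Tendsto.const_mul_sub_div {α : Type*} {l : Filter α} {a b : α → ℝ} {L : ℝ}
    (h : Tendsto (fun x => b x / a x) l (𝓝 L)) (hL : L ≠ 0) (c : ℝ) :
    Tendsto (fun x => (c * a x - b x) / a x) l (𝓝 (c - L)) := by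
  refine (h.const_sub c).congr' ?_
  filter_upwards [h.eventually_ne hL] with x hx
  have ha : a x ≠ 0 := fun ha => hx (by rw [ha, div_zero])
  field_simp

section

variable {γ γ' G h m F A : ℝ → ℝ}

theorem integrableAtFilter_exp_neg (hγ : ∀ y, HasDerivAt γ (γ' y) y)
    (hγ' : Tendsto γ' atTop atTop) : IntegrableAtFilter (fun t => exp (-γ t)) atTop := by
  have hγc : Continuous γ := continuous_iff_continuousAt.2 fun y => (hγ y).continuousAt
  have hlinear : Tendsto (fun y => γ y - y) atTop atTop :=
    tendsto_atTop_of_hasDerivAt_of_tendsto_atTop (fun y => (hγ y).sub (hasDerivAt_id y))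
      (tendsto_atTop_add_const_right _ (-1) hγ')
  have hbound : (fun t => exp (-γ t)) =O[atTop] fun t => exp (-1 * t) := by
    refine IsBigO.of_bound 1 ?_
    filter_upwards [hlinear.eventually_ge_atTop 0] with t ht
    simp only [norm_eq_abs, abs_exp, one_mul, neg_one_mul, exp_le_exp]
    linarith
  exact hbound.integrableAtFilter
    ((by fun_prop : Continuous fun t => exp (-γ t)).stronglyMeasurableAtFilter _ _)
    ⟨Ioi 0, Ioi_mem_atTop 0, exp_neg_integrableOn_Ioi 0 one_pos⟩

theorem tendsto_mul_exp_mul_integral_Ioi_exp_neg (hγ : ∀ y, HasDerivAt γ (γ' y) y)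
    (hγ' : Tendsto γ' atTop atTop) {γ'' : ℝ → ℝ}
    (hγ'' : ∀ᶠ y in atTop, HasDerivAt γ' (γ'' y) y)
    (hratio : Tendsto (fun y => γ'' y / γ' y ^ 2) atTop (𝓝 0)) :
    Tendsto (fun y => γ' y * (exp (γ y) * ∫ t in Ioi y, exp (-γ t))) atTop (𝓝 1) := by
  have hγc : Continuous γ := continuous_iff_continuousAt.2 fun y => (hγ y).continuousAt
  have hexp := integrableAtFilter_exp_neg hγ hγ'
  have hcorr : Tendsto (fun y => 1 + γ'' y / γ' y ^ 2) atTop (𝓝 1) := by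
    simpa using hratio.const_add 1
  have hcompd : ∀ᶠ y in atTop, HasDerivAt (fun y => exp (-γ y) / γ' y)
      (-exp (-γ y) * (1 + γ'' y / γ' y ^ 2)) y := by
    filter_upwards [hγ'', hγ'.eventually_gt_atTop 0] with y hy hpos
    exact ((hγ y).neg.exp.div hy hpos.ne').congr_deriv
      (by simp only [Pi.neg_apply]; field_simp; ring)
  have hcompd_ne : ∀ᶠ y in atTop, -exp (-γ y) * (1 + γ'' y / γ' y ^ 2) ≠ 0 := by
    filter_upwards [hcorr.eventually_ne one_ne_zero] with y hy
    exact mul_ne_zero (neg_ne_zero.2 (exp_pos _).ne') hy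
  have hcomp0 : Tendsto (fun y => exp (-γ y) / γ' y) atTop (𝓝 0) :=
    (tendsto_exp_atBot.comp (tendsto_neg_atTop_atBot.comp
      (tendsto_atTop_of_hasDerivAt_of_tendsto_atTop hγ hγ'))).div_atTop hγ'
  have hderiv_ratio : Tendsto (fun y => -exp (-γ y) / (-exp (-γ y) * (1 + γ'' y / γ' y ^ 2)))
      atTop (𝓝 1) := by
    simp_rw [div_mul_cancel_left₀ (neg_ne_zero.2 (exp_pos _).ne')]
    simpa using hcorr.inv₀ one_ne_zero
  have hlhopital := HasDerivAt.lhopital_zero_atTop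
    (Eventually.of_forall (hasDerivAt_integral_Ioi_s17 (by fun_prop) hexp)) hcompd hcompd_ne
    (tendsto_integral_Ioi_atTop hexp) hcomp0 hderiv_ratio
  refine hlhopital.congr fun y => ?_
  rw [div_div_eq_mul_div, exp_neg, div_inv_eq_mul]
  ring

theorem integrableOn_exp_mul_integral_Ioi_exp_neg (hγ : Continuous γ)
    (hexp : IntegrableAtFilter (fun t => exp (-γ t)) atTop) {s : Set ℝ}
    (H1 : ∫⁻ y in s,
      ENNReal.ofReal (exp (γ y)) * ∫⁻ z in Ioi y, ENNReal.ofReal (exp (-γ z)) < ⊤) :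
    IntegrableOn (fun y => exp (γ y) * ∫ t in Ioi y, exp (-γ t)) s := by
  have hwc : Continuous fun t => exp (-γ t) := by fun_prop
  have hGc : Continuous fun y => ∫ t in Ioi y, exp (-γ t) :=
    continuous_iff_continuousAt.2 fun y => (hasDerivAt_integral_Ioi_s17 hwc hexp y).continuousAt
  have hG_nonneg : ∀ y, 0 ≤ ∫ t in Ioi y, exp (-γ t) := fun y =>
    (integral_Ioi_pos (fun _ => exp_pos _) (hwc.integrableOn_Ioi hexp y)).le
  refine ⟨(by fun_prop : Continuous _).aestronglyMeasurable, ?_⟩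
  rw [hasFiniteIntegral_iff_ofReal
    (ae_of_all _ fun y => mul_nonneg (exp_pos _).le (hG_nonneg y))]
  refine lt_of_eq_of_lt (lintegral_congr fun y => ?_) H1
  rw [ENNReal.ofReal_mul (exp_pos _).le, ofReal_integral_eq_lintegral_ofReal
    (hwc.integrableOn_Ioi hexp y) (ae_of_all _ fun _ => (exp_pos _).le)]

theorem hasDerivAt_exp_mul_integral_Ioi_exp_neg (hγ : ∀ y, HasDerivAt γ (γ' y) y)
    (hexp : IntegrableAtFilter (fun t => exp (-γ t)) atTop) (y : ℝ) :
    HasDerivAt (fun y => exp (γ y) * ∫ t in Ioi y, exp (-γ t))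
      (γ' y * (exp (γ y) * ∫ t in Ioi y, exp (-γ t)) - 1) y := by
  have hγc : Continuous γ := continuous_iff_continuousAt.2 fun y => (hγ y).continuousAt
  exact ((hγ y).exp.mul (hasDerivAt_integral_Ioi_s17 (by fun_prop) hexp y)).congr_deriv
    (by rw [exp_neg]; field_simp; ring)

theorem tendsto_sq_div_of_hasDerivAt
    (hh : ∀ y, HasDerivAt h (γ' y * h y - 1) y) (hm : ∀ y, HasDerivAt m (-(2 * h y)) y)
    (hpos : ∀ y, 0 < h y) (hh0 : Tendsto h atTop (𝓝 0)) (hm0 : Tendsto m atTop (𝓝 0))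
    (hlim : Tendsto (fun y => γ' y * h y) atTop (𝓝 1)) :
    Tendsto (fun y => h y ^ 2 / m y) atTop (𝓝 0) := by
  have hsq : ∀ y, HasDerivAt (fun y => h y ^ 2) (2 * h y * (γ' y * h y - 1)) y :=
    fun y => ((hh y).pow 2).congr_deriv (by ring)
  refine HasDerivAt.lhopital_zero_atTop (.of_forall hsq) (.of_forall hm)
    (.of_forall fun y => neg_ne_zero.2 (mul_pos two_pos (hpos y)).ne')
    (by simpa using hh0.pow 2) hm0 ?_
  have hlim' : Tendsto (fun y => 1 - γ' y * h y) atTop (𝓝 0) := by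
    simpa using hlim.const_sub 1
  refine hlim'.congr fun y => ?_
  field_simp [(hpos y).ne']
  ring

theorem tendsto_div_mul_of_hasDerivAt (hG : ∀ y, HasDerivAt G (-exp (-γ y)) y)
    (hm : ∀ y, HasDerivAt m (-(2 * (exp (γ y) * G y))) y)
    (hF : ∀ y, HasDerivAt F (-(m y * exp (-γ y))) y) (hmpos : ∀ y, 0 < m y)
    (hG0 : Tendsto G atTop (𝓝 0)) (hm0 : Tendsto m atTop (𝓝 0))
    (hF0 : Tendsto F atTop (𝓝 0))
    (hsq : Tendsto (fun y => (exp (γ y) * G y) ^ 2 / m y) atTop (𝓝 0)) :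
    Tendsto (fun y => F y / (m y * G y)) atTop (𝓝 1) := by
  have hmG : ∀ y, HasDerivAt (fun y => m y * G y)
      (-(exp (-γ y) * (2 * (exp (γ y) * G y) ^ 2 + m y))) y := fun y =>
    ((hm y).mul (hG y)).congr_deriv (by rw [exp_neg]; field_simp; ring)
  have hmG_ne : ∀ y, -(exp (-γ y) * (2 * (exp (γ y) * G y) ^ 2 + m y)) ≠ 0 := fun y =>
    neg_ne_zero.2 (mul_pos (exp_pos _) (add_pos_of_nonneg_of_pos (by positivity) (hmpos y))).ne'
  refine HasDerivAt.lhopital_zero_atTop (.of_forall hF) (.of_forall hmG) (.of_forall hmG_ne) hF0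
    (by simpa using hm0.mul hG0) ?_
  have hsq' : Tendsto (fun y => (1 + 2 * ((exp (γ y) * G y) ^ 2 / m y))⁻¹) atTop (𝓝 1) := by
    simpa using ((hsq.const_mul 2).const_add 1).inv₀ (by norm_num)
  refine hsq'.congr fun y => ?_
  have hm_ne := (hmpos y).ne'
  field_simp
  ring

theorem tendsto_four_mul_div_sq_of_hasDerivAt (hA : ∀ y, HasDerivAt A (-(exp (γ y) * F y)) y)
    (hm : ∀ y, HasDerivAt m (-(2 * (exp (γ y) * G y))) y)
    (hGpos : ∀ y, 0 < G y) (hmpos : ∀ y, 0 < m y)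
    (hA0 : Tendsto A atTop (𝓝 0)) (hm0 : Tendsto m atTop (𝓝 0))
    (hFmG : Tendsto (fun y => F y / (m y * G y)) atTop (𝓝 1)) :
    Tendsto (fun y => 4 * A y / m y ^ 2) atTop (𝓝 1) := by
  have hA4 : ∀ y, HasDerivAt (fun y => 4 * A y) (-(4 * (exp (γ y) * F y))) y := fun y =>
    ((hA y).const_mul 4).congr_deriv (by ring)
  have hmsq : ∀ y, HasDerivAt (fun y => m y ^ 2) (-(4 * (exp (γ y) * (m y * G y)))) y :=
    fun y => ((hm y).pow 2).congr_deriv (by ring)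
  refine HasDerivAt.lhopital_zero_atTop (.of_forall hA4) (.of_forall hmsq)
    (.of_forall fun y => neg_ne_zero.2 (by have := hmpos y; have := hGpos y; positivity))
    (by simpa using hA0.const_mul 4) (by simpa using hm0.pow 2) ?_
  refine hFmG.congr fun y => ?_
  rw [neg_div_neg_eq, mul_div_mul_left _ _ four_ne_zero, mul_div_mul_left _ _ (exp_pos _).ne']

theorem tendsto_four_mul_integral_div_sq (hγ : ∀ y, HasDerivAt γ (γ' y) y)
    (hγ' : Tendsto γ' atTop atTop)
    (hh : IntegrableAtFilter (fun y => exp (γ y) * ∫ t in Ioi y, exp (-γ t)) atTop)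
    (hlim : Tendsto (fun y => γ' y * (exp (γ y) * ∫ t in Ioi y, exp (-γ t))) atTop (𝓝 1))
    (hm : ∀ z, m z = 2 * ∫ y in Ioi z, exp (γ y) * ∫ ξ in Ioi y, exp (-γ ξ)) :
    Tendsto
      (fun z => (4 * ∫ y in Ioi z, exp (γ y) * ∫ ξ in Ioi y, m ξ * exp (-γ ξ)) / m z ^ 2)
      atTop (𝓝 1) := by
  have hγc : Continuous γ := continuous_iff_continuousAt.2 fun y => (hγ y).continuousAt
  have hexp := integrableAtFilter_exp_neg hγ hγ'
  set G : ℝ → ℝ := fun y => ∫ t in Ioi y, exp (-γ t)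
  have hGd : ∀ y, HasDerivAt G (-exp (-γ y)) y := hasDerivAt_integral_Ioi_s17 (by fun_prop) hexp
  have hGpos : ∀ y, 0 < G y := fun y =>
    integral_Ioi_pos (fun _ => exp_pos _) ((by fun_prop : Continuous _).integrableOn_Ioi hexp y)
  set h : ℝ → ℝ := fun y => exp (γ y) * G y
  have hhd : ∀ y, HasDerivAt h (γ' y * h y - 1) y :=
    hasDerivAt_exp_mul_integral_Ioi_exp_neg hγ hexp
  have hhc : Continuous h := continuous_iff_continuousAt.2 fun y => (hhd y).continuousAt
  have hhpos : ∀ y, 0 < h y := fun y => mul_pos (exp_pos _) (hGpos y)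
  have hh0 : Tendsto h atTop (𝓝 0) := (hlim.div_atTop hγ').congr' <| by
    filter_upwards [hγ'.eventually_gt_atTop 0] with y hy
    exact mul_div_cancel_left₀ _ hy.ne'
  have hmd : ∀ z, HasDerivAt m (-(2 * h z)) z := fun z => by
    rw [funext hm]
    exact ((hasDerivAt_integral_Ioi_s17 hhc hh z).const_mul 2).congr_deriv (by ring)
  have hmpos : ∀ z, 0 < m z := fun z =>
    hm z ▸ mul_pos two_pos (integral_Ioi_pos hhpos (hhc.integrableOn_Ioi hh z))
  have hm0 : Tendsto m atTop (𝓝 0) := by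
    rw [funext hm]
    simpa using (tendsto_integral_Ioi_atTop hh).const_mul 2
  have hmc : Continuous m := continuous_iff_continuousAt.2 fun z => (hmd z).continuousAt
  have hmw : IntegrableAtFilter (fun ξ => m ξ * exp (-γ ξ)) atTop :=
    ((hm0.isBigO_one ℝ).mul (isBigO_refl _ atTop)).integrableAtFilter
      (Continuous.stronglyMeasurableAtFilter (by fun_prop) _ _) (by simpa using hexp)
  set F : ℝ → ℝ := fun y => ∫ ξ in Ioi y, m ξ * exp (-γ ξ)
  have hFd : ∀ y, HasDerivAt F (-(m y * exp (-γ y))) y :=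
    hasDerivAt_integral_Ioi_s17 (by fun_prop) hmw
  have hFc : Continuous F := continuous_iff_continuousAt.2 fun y => (hFd y).continuousAt
  have hFmG : Tendsto (fun y => F y / (m y * G y)) atTop (𝓝 1) :=
    tendsto_div_mul_of_hasDerivAt hGd hmd hFd hmpos (tendsto_integral_Ioi_atTop hexp) hm0
      (tendsto_integral_Ioi_atTop hmw) (tendsto_sq_div_of_hasDerivAt hhd hmd hhpos hh0 hm0 hlim)
  -- `F / G ~ m → 0`, so `e^γ F = O(e^γ G)` is integrable.
  have hFG : F =O[atTop] G := by
    refine isBigO_of_div_tendsto_nhds (.of_forall fun y hy => absurd hy (hGpos y).ne') 0 ?_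
    simpa using (hFmG.mul hm0).congr fun y => by rw [Pi.div_apply]; field_simp [(hmpos y).ne']
  have hPc : Continuous fun y => exp (γ y) * F y := (continuous_exp.comp hγc).mul hFc
  have hP : IntegrableAtFilter (fun y => exp (γ y) * F y) atTop :=
    ((isBigO_refl (fun y => exp (γ y)) atTop).mul hFG).integrableAtFilter
      (hPc.stronglyMeasurableAtFilter _ _) hh
  exact tendsto_four_mul_div_sq_of_hasDerivAt (hasDerivAt_integral_Ioi_s17 hPc hP) hmd hGpos
    hmpos (tendsto_integral_Ioi_atTop hP) hm0 hFmG

end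

/-- Under H1 and H2, with m(z) = 2∫_z^∞ e^{γ(y)}∫_y^∞ e^{-γ(ξ)}dξ dy:
(4∫_z^∞ e^{γ(y)}∫_y^∞ m(ξ)e^{-γ(ξ)}dξ dy)/m(z)² → 1, and hence with
m₂(z) = 2m(z)² - 4∫_z^∞ e^{γ(y)}∫_y^∞ m(ξ)e^{-γ(ξ)}dξ dy, m₂(z)/m(z)² → 1. -/
theorem second_moment_ratio_tendsto_one
    (q γ m : ℝ → ℝ)
    (hq : ContDiff ℝ 1 q)
    (hγ : ∀ y, γ y = 2 * ∫ t in (0:ℝ)..y, q t)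
    (hm : ∀ z, m z =
        2 * ∫ y in Set.Ioi z, Real.exp (γ y) * ∫ ξ in Set.Ioi y, Real.exp (-(γ ξ)))
    (H1 : ∫⁻ y in Set.Ioi (0:ℝ),
        ENNReal.ofReal (Real.exp (γ y)) *
          ∫⁻ z in Set.Ioi y, ENNReal.ofReal (Real.exp (-(γ z))) < ⊤)
    (H2a : Tendsto q atTop atTop)
    (H2b : Tendsto (fun x => deriv q x / q x ^ 2) atTop (nhds 0)) :
    Tendsto
      (fun z =>
        (4 * ∫ y in Set.Ioi z,
            Real.exp (γ y) * ∫ ξ in Set.Ioi y, m ξ * Real.exp (-(γ ξ))) / m z ^ 2)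
      atTop (nhds 1) ∧
    Tendsto
      (fun z =>
        (2 * m z ^ 2 -
            4 * ∫ y in Set.Ioi z,
              Real.exp (γ y) * ∫ ξ in Set.Ioi y, m ξ * Real.exp (-(γ ξ))) / m z ^ 2)
      atTop (nhds 1) := by
  have hγd : ∀ y, HasDerivAt γ (2 * q y) y := fun y => by
    rw [funext hγ]
    exact (hq.continuous.integral_hasStrictDerivAt 0 y).hasDerivAt.const_mul 2
  have h2q : Tendsto (fun y => 2 * q y) atTop atTop := H2a.const_mul_atTop two_pos
  have hexp := integrableAtFilter_exp_neg hγd h2q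
  have hh := integrableOn_exp_mul_integral_Ioi_exp_neg
    (continuous_iff_continuousAt.2 fun y => (hγd y).continuousAt) hexp H1
  have hlim := tendsto_mul_exp_mul_integral_Ioi_exp_neg hγd h2q
    (.of_forall fun y => (hq.differentiable one_ne_zero y).hasDerivAt.const_mul 2)
    (by simpa using (H2b.div_const 2).congr fun y => by ring)
  have hmain := tendsto_four_mul_integral_div_sq hγd h2q ⟨Ioi 0, Ioi_mem_atTop 0, hh⟩ hlim hm
  refine ⟨hmain, ?_⟩
  convert hmain.const_mul_sub_div one_ne_zero 2 using 2
  norm_num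
end

section
/- Assume H1 and H2 and define V(z) = 8∫_z^∞ e^{γ(y)} ∫_y^∞ e^{γ(η)} (∫_η^∞ e^{-γ(ξ)}dξ)² dη dy. Then lim_{z→∞} V(z) / ∫_z^∞ q(y)^{-3} dy = 1. -/
/-!
Write `J y = ∫_y^∞ e^{-γ}`, `K y = ∫_y^∞ e^{γ} J²` and `P = 2 q e^{γ} J`. Three applications of
L'Hôpital's rule at `+∞` give the result. First `J ~ e^{-γ} / (2q)`, i.e. `P → 1`, because
`(e^{-γ} / (2q))' = -e^{-γ} (1 + q' / (2q²))` and `q' / q² → 0`. Next `K ~ e^{2γ} J³`, because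
`(e^{2γ} J³)' = e^{γ} J² (2P - 3)` and `2P - 3 → -1`. Finally the integrands of the two tails
`8 ∫_z^∞ e^{γ} K` and `∫_z^∞ q⁻³` have ratio `8 q³ e^{γ} K = P³ · K / (e^{2γ} J³) → 1`.
H1 says that `e^{γ} J` is integrable at `∞`. Since `J ≤ J(0)` and `K ≤ (∫_0^∞ e^{γ} J) J`, it
dominates `e^{γ} J²` and `e^{γ} K` up to constants, and the positive limit of the last ratio makes
`q⁻³` integrable too.
-/

open MeasureTheory Real Filter Set Topology

noncomputable def tailIntegral (f : ℝ → ℝ) (y : ℝ) : ℝ := ∫ x in Ioi y, f x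

section TailIntegral

variable {f g : ℝ → ℝ} {a y l : ℝ}

lemma tailIntegral_eq_sub_intervalIntegral (hf : IntegrableOn f (Ioi a)) (hay : a ≤ y) :
    tailIntegral f y = tailIntegral f a - ∫ x in a..y, f x := by
  rw [tailIntegral, tailIntegral, intervalIntegral.integral_of_le hay, ← Ioc_union_Ioi_eq_Ioi hay,
    setIntegral_union (Ioc_disjoint_Ioi le_rfl) measurableSet_Ioi
      (hf.mono_set (Ioc_subset_Ioi_self)) (hf.mono_set (Ioi_subset_Ioi hay))]
  ring

lemma integrableOn_Ioi_of_continuous (hf : Continuous f) (hfi : IntegrableOn f (Ioi a)) (y : ℝ) :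
    IntegrableOn f (Ioi y) := by
  rcases le_total a y with h | h
  · exact hfi.mono_set (Ioi_subset_Ioi h)
  · rw [← Ioc_union_Ioi_eq_Ioi h]
    exact hf.integrableOn_Ioc.union hfi

lemma tendsto_tailIntegral_atTop (hfi : IntegrableOn f (Ioi a)) :
    Tendsto (tailIntegral f) atTop (𝓝 0) := by
  have h := tendsto_setIntegral_of_antitone (μ := volume) (fun y : ℝ => measurableSet_Ioi)
    (fun _ _ hyz => Ioi_subset_Ioi hyz) ⟨a, hfi⟩
  have hempty : ⋂ y : ℝ, Ioi y = ∅ := iInter_eq_empty_iff.2 fun x => ⟨x, lt_irrefl x⟩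
  rwa [hempty, Measure.restrict_empty, integral_zero_measure] at h

lemma hasDerivAt_tailIntegral (hf : ContinuousOn f (Ioi a)) (hfi : IntegrableOn f (Ioi a))
    (hy : a < y) : HasDerivAt (tailIntegral f) (-f y) y := by
  have hderiv : HasDerivAt (fun z => tailIntegral f a - ∫ x in a..z, f x) (-f y) y :=
    (intervalIntegral.integral_hasDerivAt_right
      ((intervalIntegrable_iff_integrableOn_Ioc_of_le hy.le).2 (hfi.mono_set Ioc_subset_Ioi_self))
      (hf.stronglyMeasurableAtFilter isOpen_Ioi _ hy)
      (hf.continuousAt (Ioi_mem_nhds hy))).const_sub _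
  exact hderiv.congr_of_eventuallyEq <| eventually_of_mem (Ioi_mem_nhds hy)
    fun z hz => tailIntegral_eq_sub_intervalIntegral hfi (le_of_lt hz)

lemma hasDerivAt_tailIntegral_of_continuous (hf : Continuous f)
    (hfi : ∀ y, IntegrableOn f (Ioi y)) (y : ℝ) : HasDerivAt (tailIntegral f) (-f y) y :=
  hasDerivAt_tailIntegral hf.continuousOn (hfi (y - 1)) (sub_one_lt y)

lemma continuous_tailIntegral (hf : Continuous f) (hfi : ∀ y, IntegrableOn f (Ioi y)) :
    Continuous (tailIntegral f) :=
  continuous_iff_continuousAt.2 fun y =>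
    (hasDerivAt_tailIntegral_of_continuous hf hfi y).continuousAt

lemma tailIntegral_nonneg (hf : ∀ x, 0 ≤ f x) (y : ℝ) : 0 ≤ tailIntegral f y :=
  setIntegral_nonneg measurableSet_Ioi fun x _ => hf x

lemma tailIntegral_antitone (hf : ∀ x, 0 ≤ f x) (hfi : ∀ y, IntegrableOn f (Ioi y)) :
    Antitone (tailIntegral f) := fun y _ hyz =>
  setIntegral_mono_set (hfi y) (Eventually.of_forall hf) (Ioi_subset_Ioi hyz).eventuallyLE

lemma tailIntegral_exp_pos {γ : ℝ → ℝ} (hγ : IntegrableOn (fun x => exp (γ x)) (Ioi y)) :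
    0 < tailIntegral (fun x => exp (γ x)) y := by
  have : NeZero (volume.restrict (Ioi y)) := ⟨by simp⟩
  exact integral_exp_pos hγ

lemma MeasureTheory.IntegrableOn.mul_of_antitone {J : ℝ → ℝ} (hf : IntegrableOn f (Ioi a))
    (hJ : Antitone J) (hJ0 : ∀ x, 0 ≤ J x) : IntegrableOn (fun x => f x * J x) (Ioi a) := by
  refine hf.mul_bdd hJ.measurable.aestronglyMeasurable (c := J a) ?_
  filter_upwards [ae_restrict_mem measurableSet_Ioi] with x hx
  rw [norm_of_nonneg (hJ0 x)]
  exact hJ (le_of_lt hx)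

lemma tailIntegral_mul_le {J : ℝ → ℝ} (hf : ∀ x, 0 ≤ f x) (hfi : IntegrableOn f (Ioi y))
    (hJ : Antitone J) (hJ0 : ∀ x, 0 ≤ J x) :
    tailIntegral (fun x => f x * J x) y ≤ tailIntegral f y * J y := by
  rw [tailIntegral, tailIntegral, ← integral_mul_const]
  refine setIntegral_mono_on (hfi.mul_of_antitone hJ hJ0) (hfi.mul_const _) measurableSet_Ioi
    fun x hx => mul_le_mul_of_nonneg_left (hJ (le_of_lt hx)) (hf x)

lemma integrableOn_mul_tailIntegral_of_lintegral_lt_top (hf : ∀ x, 0 ≤ f x)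
    (hg : ∀ x, 0 ≤ g x) (hgi : ∀ y, IntegrableOn g (Ioi y))
    (hm : AEStronglyMeasurable (fun y => f y * tailIntegral g y) (volume.restrict (Ioi a)))
    (H : ∫⁻ y in Ioi a, ENNReal.ofReal (f y) * ∫⁻ z in Ioi y, ENNReal.ofReal (g z) < ⊤) :
    IntegrableOn (fun y => f y * tailIntegral g y) (Ioi a) := by
  refine ⟨hm, (hasFiniteIntegral_iff_ofReal (Eventually.of_forall fun y =>
    mul_nonneg (hf y) (tailIntegral_nonneg hg y))).2 ?_⟩
  convert H using 3 with y
  rw [ENNReal.ofReal_mul (hf y), tailIntegral,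
    ofReal_integral_eq_lintegral_ofReal (hgi y) (Eventually.of_forall hg)]

lemma integrableOn_mul_tailIntegral_mul_sq {E J : ℝ → ℝ} (hE : Continuous E) (hE0 : ∀ x, 0 ≤ E x)
    (hJ : Continuous J) (hJa : Antitone J) (hJ0 : ∀ x, 0 ≤ J x)
    (hEJ : IntegrableOn (fun x => E x * J x) (Ioi a)) :
    IntegrableOn (fun y => E y * tailIntegral (fun x => E x * J x ^ 2) y) (Ioi a) := by
  have hEJ0 : ∀ x, 0 ≤ E x * J x := fun x => mul_nonneg (hE0 x) (hJ0 x)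
  have hEJi : ∀ y, IntegrableOn (fun x => E x * J x) (Ioi y) :=
    integrableOn_Ioi_of_continuous (hE.mul hJ) hEJ
  have hsq : (fun x => E x * J x ^ 2) = fun x => E x * J x * J x := by ext; ring
  have hEJJi : ∀ y, IntegrableOn (fun x => E x * J x ^ 2) (Ioi y) := fun y => by
    rw [hsq]; exact (hEJi y).mul_of_antitone hJa hJ0
  have hK : Continuous (tailIntegral fun x => E x * J x ^ 2) :=
    continuous_tailIntegral (by fun_prop) hEJJi
  refine Integrable.mono' (hEJ.const_mul (tailIntegral (fun x => E x * J x) a))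
    (hE.mul hK).aestronglyMeasurable ?_
  filter_upwards [ae_restrict_mem measurableSet_Ioi] with y hy
  have hKy : tailIntegral (fun x => E x * J x ^ 2) y
      ≤ tailIntegral (fun x => E x * J x) a * J y := by
    rw [hsq]
    calc _ ≤ tailIntegral (fun x => E x * J x) y * J y :=
          tailIntegral_mul_le hEJ0 (hEJi y) hJa hJ0
      _ ≤ _ := mul_le_mul_of_nonneg_right
          (tailIntegral_antitone hEJ0 hEJi (le_of_lt hy)) (hJ0 y)
  rw [norm_of_nonneg (mul_nonneg (hE0 y)
    (tailIntegral_nonneg (fun x => mul_nonneg (hE0 x) (pow_nonneg (hJ0 x) 2)) y))]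
  calc E y * tailIntegral (fun x => E x * J x ^ 2) y
      ≤ E y * (tailIntegral (fun x => E x * J x) a * J y) :=
        mul_le_mul_of_nonneg_left hKy (hE0 y)
    _ = _ := by ring

lemma eventually_integrableOn_of_tendsto_div (hfi : IntegrableOn f (Ioi a))
    (hg : ContinuousOn g (Ioi a)) (hl : l ≠ 0)
    (hfg : Tendsto (fun x => f x / g x) atTop (𝓝 l)) :
    ∀ᶠ b in atTop, IntegrableOn g (Ioi b) := by
  have hlarge : ∀ᶠ x in atTop, ‖l‖ / 2 < ‖f x / g x‖ :=
    hfg.norm.eventually (lt_mem_nhds (half_lt_self (norm_pos_iff.2 hl)))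
  obtain ⟨b₀, hb₀⟩ := eventually_atTop.1 hlarge
  filter_upwards [eventually_ge_atTop (max a b₀)] with b hb
  refine Integrable.mono' ((hfi.mono_set (Ioi_subset_Ioi (le_of_max_le_left hb))).norm.const_mul
    (2 / ‖l‖)) ((hg.mono (Ioi_subset_Ioi (le_of_max_le_left hb))).aestronglyMeasurable
      measurableSet_Ioi) ?_
  filter_upwards [ae_restrict_mem measurableSet_Ioi] with x hx
  have hx' := hb₀ x ((le_of_max_le_right hb).trans hx.le)
  -- `f x / g x` is junk `0` when `g x = 0`, which the bound excludes
  have hgx : g x ≠ 0 := fun h => by simp [h] at hx'; linarith [abs_nonneg l]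
  rw [norm_div, lt_div_iff₀ (norm_pos_iff.2 hgx)] at hx'
  rw [div_mul_eq_mul_div, le_div_iff₀ (norm_pos_iff.2 hl)]
  linarith

lemma tendsto_tailIntegral_div_tailIntegral (hf : ContinuousOn f (Ioi a))
    (hg : ContinuousOn g (Ioi a)) (hfi : IntegrableOn f (Ioi a)) (hl : l ≠ 0)
    (hfg : Tendsto (fun x => f x / g x) atTop (𝓝 l)) :
    Tendsto (fun y => tailIntegral f y / tailIntegral g y) atTop (𝓝 l) := by
  obtain ⟨b, hab, hgi⟩ := ((eventually_ge_atTop a).and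
    (eventually_integrableOn_of_tendsto_div hfi hg hl hfg)).exists
  refine HasDerivAt.lhopital_zero_atTop (f' := fun y => -f y) (g' := fun y => -g y)
    ((eventually_gt_atTop a).mono fun y hy => hasDerivAt_tailIntegral hf hfi hy)
    ((eventually_gt_atTop b).mono fun y hy =>
      hasDerivAt_tailIntegral (hg.mono (Ioi_subset_Ioi hab)) hgi hy)
    ((hfg.eventually_ne hl).mono fun x hx => neg_ne_zero.2 fun h => hx (by simp [h]))
    (tendsto_tailIntegral_atTop hfi) (tendsto_tailIntegral_atTop hgi) ?_
  simpa only [neg_div_neg_eq] using hfg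

end TailIntegral

section ComingDownFromInfinity

variable {q γ J : ℝ → ℝ}

lemma exists_add_two_mul_sub_le (hγ : ∀ y, HasDerivAt γ (2 * q y) y)
    (hq : Tendsto q atTop atTop) : ∃ a, ∀ y, a ≤ y → γ a + 2 * (y - a) ≤ γ y := by
  obtain ⟨a, ha⟩ := eventually_atTop.1 (hq.eventually_ge_atTop 1)
  refine ⟨a, fun y hy => ?_⟩
  have hslope := (convex_Ici a).mul_sub_le_image_sub_of_le_deriv
    (fun x _ => (hγ x).continuousAt.continuousWithinAt)
    (fun x _ => (hγ x).differentiableAt.differentiableWithinAt) (C := 2)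
    (fun x hx => by
      rw [interior_Ici] at hx
      rw [(hγ x).deriv]
      linarith [ha x (le_of_lt hx)])
    a self_mem_Ici y hy hy
  linarith

lemma tendsto_atTop_of_hasDerivAt_two_mul (hγ : ∀ y, HasDerivAt γ (2 * q y) y)
    (hq : Tendsto q atTop atTop) : Tendsto γ atTop atTop := by
  obtain ⟨a, ha⟩ := exists_add_two_mul_sub_le hγ hq
  refine tendsto_atTop_mono' atTop ((eventually_ge_atTop a).mono ha) ?_
  exact tendsto_atTop_add_const_left _ _
    ((tendsto_atTop_add_const_right _ _ tendsto_id).const_mul_atTop two_pos)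

lemma integrableOn_exp_neg (hγ : ∀ y, HasDerivAt γ (2 * q y) y)
    (hq : Tendsto q atTop atTop) (y : ℝ) : IntegrableOn (fun x => exp (-γ x)) (Ioi y) := by
  obtain ⟨a, ha⟩ := exists_add_two_mul_sub_le hγ hq
  have hcont : Continuous fun x => exp (-γ x) :=
    continuous_exp.comp (continuous_iff_continuousAt.2 fun x => (hγ x).continuousAt).neg
  refine integrableOn_Ioi_of_continuous hcont (a := a) ?_ y
  refine Integrable.mono' ((exp_neg_integrableOn_Ioi a two_pos).const_mul (exp (2 * a - γ a)))
    hcont.aestronglyMeasurable ?_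
  filter_upwards [ae_restrict_mem measurableSet_Ioi] with x hx
  rw [norm_of_nonneg (exp_pos _).le, ← exp_add, exp_le_exp]
  linarith [ha x (le_of_lt hx)]

lemma tendsto_two_mul_mul_exp_mul {q' : ℝ → ℝ} (hq : ∀ y, HasDerivAt q (q' y) y)
    (hγ : ∀ y, HasDerivAt γ (2 * q y) y) (hJ : ∀ y, HasDerivAt J (-exp (-γ y)) y)
    (hJ0 : Tendsto J atTop (𝓝 0)) (hqtop : Tendsto q atTop atTop)
    (hq' : Tendsto (fun y => q' y / q y ^ 2) atTop (𝓝 0)) :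
    Tendsto (fun y => 2 * q y * exp (γ y) * J y) atTop (𝓝 1) := by
  have hqpos : ∀ᶠ y in atTop, 0 < q y := hqtop.eventually_gt_atTop 0
  have hcorr : Tendsto (fun y => 1 + q' y / q y ^ 2 / 2) atTop (𝓝 1) := by
    simpa using tendsto_const_nhds.add (hq'.div_const 2)
  have hderiv : ∀ᶠ y in atTop, HasDerivAt (fun y => exp (-γ y) / (2 * q y))
      (-exp (-γ y) * (1 + q' y / q y ^ 2 / 2)) y := by
    filter_upwards [hqpos] with y hy
    refine ((hγ y).fun_neg.exp.fun_div ((hq y).const_mul 2) (by positivity)).congr_deriv ?_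
    field_simp
    ring
  have hratio : Tendsto (fun y => J y / (exp (-γ y) / (2 * q y))) atTop (𝓝 1) := by
    refine HasDerivAt.lhopital_zero_atTop (Eventually.of_forall hJ) hderiv ?_ hJ0
      (((tendsto_exp_atBot.comp (tendsto_neg_atTop_atBot.comp
        (tendsto_atTop_of_hasDerivAt_two_mul hγ hqtop)))).div_atTop
        (hqtop.const_mul_atTop two_pos)) ?_
    · filter_upwards [hcorr.eventually_const_lt one_half_lt_one] with y hy
      have := exp_pos (-γ y)
      nlinarith
    · have hinv := hcorr.inv₀ one_ne_zero
      rw [inv_one] at hinv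
      exact hinv.congr fun y => by
        rw [neg_mul, neg_div_neg_eq, div_mul_cancel_left₀ (exp_pos _).ne']
  refine hratio.congr' ?_
  filter_upwards [hqpos] with y hy
  rw [exp_neg]
  field_simp

lemma tendsto_tailIntegral_div_exp_sq_mul_pow_three {a : ℝ}
    (hγ : ∀ y, HasDerivAt γ (2 * q y) y) (hJ : ∀ y, HasDerivAt J (-exp (-γ y)) y)
    (hJpos : ∀ y, 0 < J y) (hJ0 : Tendsto J atTop (𝓝 0)) (hqtop : Tendsto q atTop atTop)
    (hP : Tendsto (fun y => 2 * q y * exp (γ y) * J y) atTop (𝓝 1))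
    (hK : IntegrableOn (fun x => exp (γ x) * J x ^ 2) (Ioi a)) :
    Tendsto (fun y => tailIntegral (fun x => exp (γ x) * J x ^ 2) y / (exp (γ y) ^ 2 * J y ^ 3))
      atTop (𝓝 1) := by
  have hcont : Continuous fun x => exp (γ x) * J x ^ 2 :=
    (continuous_exp.comp (continuous_iff_continuousAt.2 fun x => (hγ x).continuousAt)).mul
      ((continuous_iff_continuousAt.2 fun x => (hJ x).continuousAt).pow 2)
  have hEJ0 : Tendsto (fun y => exp (γ y) * J y) atTop (𝓝 0) := by
    refine (hP.div_atTop (hqtop.const_mul_atTop two_pos)).congr' ?_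
    filter_upwards [hqtop.eventually_gt_atTop 0] with y hy
    field_simp
  have hderiv : ∀ y, HasDerivAt (fun y => exp (γ y) ^ 2 * J y ^ 3)
      (exp (γ y) * J y ^ 2 * (2 * (2 * q y * exp (γ y) * J y) - 3)) y := by
    intro y
    refine (((hγ y).exp.fun_pow 2).fun_mul ((hJ y).fun_pow 3)).congr_deriv ?_
    rw [exp_neg]
    field_simp
    ring
  have hP32 : ∀ᶠ y in atTop, 2 * (2 * q y * exp (γ y) * J y) - 3 < 0 := by
    filter_upwards [hP.eventually_lt_const (by norm_num : (1 : ℝ) < 3 / 2)] with y hy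
    linarith
  refine HasDerivAt.lhopital_zero_atTop
    (Eventually.of_forall fun y => hasDerivAt_tailIntegral_of_continuous hcont
      (integrableOn_Ioi_of_continuous hcont hK) y)
    (Eventually.of_forall hderiv) ?_ (tendsto_tailIntegral_atTop hK) ?_ ?_
  · filter_upwards [hP32] with y hy
    exact (mul_neg_of_pos_of_neg (by have := hJpos y; positivity) hy).ne
  · have h := (hEJ0.pow 2).mul hJ0
    rw [zero_pow two_ne_zero, zero_mul] at h
    exact h.congr fun y => by ring
  · have hlim : Tendsto (fun y => (3 - 2 * (2 * q y * exp (γ y) * J y))⁻¹) atTop (𝓝 1) := by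
      convert ((hP.const_mul 2).const_sub 3).inv₀ (by norm_num) using 2
      norm_num
    refine hlim.congr fun y => ?_
    rw [neg_div, div_mul_cancel_left₀ (by have := hJpos y; positivity), ← inv_neg, neg_sub]

lemma tendsto_eight_mul_exp_mul_tailIntegral_div_one_div_pow_three {q' : ℝ → ℝ} {a : ℝ}
    (hq : ∀ y, HasDerivAt q (q' y) y) (hγ : ∀ y, HasDerivAt γ (2 * q y) y)
    (hJ : ∀ y, HasDerivAt J (-exp (-γ y)) y) (hJpos : ∀ y, 0 < J y)
    (hJ0 : Tendsto J atTop (𝓝 0)) (hqtop : Tendsto q atTop atTop)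
    (hq' : Tendsto (fun y => q' y / q y ^ 2) atTop (𝓝 0))
    (hK : IntegrableOn (fun x => exp (γ x) * J x ^ 2) (Ioi a)) :
    Tendsto (fun y => 8 * (exp (γ y) * tailIntegral (fun x => exp (γ x) * J x ^ 2) y) /
      (1 / q y ^ 3)) atTop (𝓝 1) := by
  have hP := tendsto_two_mul_mul_exp_mul hq hγ hJ hJ0 hqtop hq'
  have h := (hP.pow 3).mul
    (tendsto_tailIntegral_div_exp_sq_mul_pow_three hγ hJ hJpos hJ0 hqtop hP hK)
  rw [one_pow, one_mul] at h
  refine h.congr' ?_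
  filter_upwards [hqtop.eventually_gt_atTop 0] with y hy
  have := hJpos y
  field_simp
  ring

end ComingDownFromInfinity

/-- Under H1 and H2, with
V(z) = 8∫_z^∞ e^{γ(y)} ∫_y^∞ e^{γ(η)} (∫_η^∞ e^{-γ(ξ)}dξ)² dη dy,
one has V(z)/∫_z^∞ q(y)⁻³ dy → 1. -/
theorem variance_asymptotics
    (q γ : ℝ → ℝ)
    (hq : ContDiff ℝ 1 q)
    (hγ : ∀ y, γ y = 2 * ∫ t in (0:ℝ)..y, q t)
    (H1 : ∫⁻ y in Set.Ioi (0:ℝ),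
        ENNReal.ofReal (Real.exp (γ y)) *
          ∫⁻ z in Set.Ioi y, ENNReal.ofReal (Real.exp (-(γ z))) < ⊤)
    (H2a : Tendsto q atTop atTop)
    (H2b : Tendsto (fun x => deriv q x / q x ^ 2) atTop (nhds 0)) :
    Tendsto
      (fun z =>
        (8 * ∫ y in Set.Ioi z,
            Real.exp (γ y) *
              ∫ η in Set.Ioi y,
                Real.exp (γ η) * (∫ ξ in Set.Ioi η, Real.exp (-(γ ξ))) ^ 2) /
          ∫ y in Set.Ioi z, 1 / q y ^ 3)
      atTop (nhds 1) := by
  have hγ' : ∀ y, HasDerivAt γ (2 * q y) y := fun y =>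
    ((hq.continuous.integral_hasStrictDerivAt 0 y).hasDerivAt.const_mul 2).congr_of_eventuallyEq
      (Eventually.of_forall hγ)
  have hγc : Continuous γ := continuous_iff_continuousAt.2 fun y => (hγ' y).continuousAt
  set J := tailIntegral fun x => exp (-γ x)
  have hJi := integrableOn_exp_neg hγ' H2a
  have hJc : Continuous J := continuous_tailIntegral (by fun_prop) hJi
  have hJpos : ∀ y, 0 < J y := fun y => tailIntegral_exp_pos (hJi y)
  have hJa : Antitone J := tailIntegral_antitone (fun x => (exp_pos _).le) hJi
  have hEJ : IntegrableOn (fun y => exp (γ y) * J y) (Ioi 0) :=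
    integrableOn_mul_tailIntegral_of_lintegral_lt_top (fun _ => (exp_pos _).le)
      (fun _ => (exp_pos _).le) hJi ((continuous_exp.comp hγc).mul hJc).aestronglyMeasurable H1
  have hK : IntegrableOn (fun y => exp (γ y) * J y ^ 2) (Ioi 0) := by
    simpa only [sq, mul_assoc] using hEJ.mul_of_antitone hJa fun y => (hJpos y).le
  have hKc : Continuous (tailIntegral fun x => exp (γ x) * J x ^ 2) :=
    continuous_tailIntegral (by fun_prop) (integrableOn_Ioi_of_continuous (by fun_prop) hK)
  have hratio := tendsto_eight_mul_exp_mul_tailIntegral_div_one_div_pow_three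
    (fun y => (hq.differentiable one_ne_zero y).hasDerivAt) hγ'
    (hasDerivAt_tailIntegral_of_continuous (by fun_prop) hJi) hJpos
    (tendsto_tailIntegral_atTop (hJi 0)) H2a H2b hK
  have hEK := (integrableOn_mul_tailIntegral_mul_sq (by fun_prop) (fun _ => (exp_pos _).le) hJc
    hJa (fun y => (hJpos y).le) hEJ).const_mul 8
  obtain ⟨b, hb⟩ := eventually_atTop.1 (H2a.eventually_gt_atTop 0)
  have hqc : ContinuousOn (fun y => 1 / q y ^ 3) (Ioi (max b 0)) :=
    continuousOn_const.div (hq.continuous.continuousOn.pow 3)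
      fun y hy => pow_ne_zero 3 (hb y (le_of_max_le_left hy.le)).ne'
  refine (tendsto_tailIntegral_div_tailIntegral (by fun_prop : Continuous _).continuousOn hqc
    (IntegrableOn.mono_set hEK (Ioi_subset_Ioi (le_max_right b 0))) one_ne_zero hratio).congr
    fun z => ?_
  rw [tailIntegral, integral_const_mul]
  rfl
end
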